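/- arXiv:math/0610193 — 7 statements merged into one kernel-verified Lean document; each statement's English description precedes it below -/
import Mathlib

section
/- Let n and k be positive integers with k + m ≤ n, let (k_1, k_2, ..., k_m) be a partition of k into m positive parts, and let p_1, p_2, ..., p_m be pairwise vertex-disjoint paths in the complete graph K_n having k_1, ..., k_m edges respectively. Then the number of Hamiltonian cycles of K_n that contain all of the paths p_1, ..., p_m equals 2^{m-1} · (n - k - 1)!. -/
/-!
A Hamiltonian cycle through the edge `{v 0 0, v 0 1}` is the edge set of exactly one vertex
sequence `σ` with `σ 0 = v 0 0` and `σ 1 = v 0 1`: two sequences with the same edge set and the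
same first two terms agree, since each further term is the neighbour of the current one other
than the previous one. If the cycle contains all the paths, each path occupies a contiguous
stretch of `σ`: the first vertex of `σ` is an endpoint of its path (otherwise its two neighbours
on the path would both be its successor in `σ`), that path follows it, and the rest of `σ` is
treated in the same way. So `σ` is path `0` followed by the `n - k - 1` other blocks in some
order, namely the other `m - 1` paths, each traversed in either direction, and the `n - k - m`
vertices off the paths. This gives `2 ^ (m - 1) * (n - k - 1)!` sequences.
-/

open Finset
noncomputable section
open scoped Classical

abbrev EdgeIdx (n : ℕ) := {e : Sym2 (Fin n) // ¬ e.IsDiag}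

def cycleVec (n : ℕ) (σ : Equiv.Perm (Fin n)) : EdgeIdx n → ℝ :=
  fun e => if ∃ i : Fin n, (e : Sym2 (Fin n)) = s(σ i, σ (finRotate n i)) then 1 else 0

def hamX (n : ℕ) : Finset (EdgeIdx n → ℝ) := Finset.image (cycleVec n) Finset.univ

def xval {n : ℕ} (x : EdgeIdx n → ℝ) (i j : Fin n) : ℝ :=
  if h : i = j then 0 else x ⟨s(i, j), by simpa [Sym2.isDiag_iff_proj_eq] using h⟩

namespace List

variable {α : Type*}

def Adjacent (L : List α) (a b : α) : Prop := [a, b] <:+: L ∨ [b, a] <:+: L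

variable {L L' l : List α} {a b c x : α}

lemma Adjacent.symm (h : Adjacent L a b) : Adjacent L b a := Or.symm h

lemma Adjacent.mono (hL : L <:+: L') (h : Adjacent L a b) : Adjacent L' a b :=
  h.imp (·.trans hL) (·.trans hL)

lemma Adjacent.of_cons (h : Adjacent (x :: L) a b) (ha : a ≠ x) (hb : b ≠ x) :
    Adjacent L a b := by
  unfold Adjacent at h
  simp only [infix_cons_iff, cons_prefix_cons] at h
  rcases h with (⟨rfl, -⟩ | h) | (⟨rfl, -⟩ | h)
  exacts [absurd rfl ha, Or.inl h, absurd rfl hb, Or.inr h]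

lemma Adjacent.of_append (h : Adjacent (l ++ L) a b) (ha : a ∉ l) (hb : b ∉ l) :
    Adjacent L a b := by
  induction l with
  | nil => exact h
  | cons y l ih =>
    simp only [mem_cons, not_or] at ha hb
    exact ih (h.of_cons ha.1 hb.1) ha.2 hb.2

lemma Adjacent.head?_eq (hL : (x :: L).Nodup) (h : Adjacent (x :: L) x c) :
    L.head? = some c := by
  have hx : x ∉ L := (nodup_cons.mp hL).1
  unfold Adjacent at h
  simp only [infix_cons_iff, cons_prefix_cons] at h
  rcases h with (⟨-, h⟩ | h) | (⟨rfl, h⟩ | h)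
  · cases L <;> simp_all
  · exact absurd (h.subset (by simp)) hx
  · cases L <;> simp_all
  · exact absurd (h.subset (by simp)) hx

lemma isChain_adjacent_self (L : List α) : L.IsChain (Adjacent L) :=
  (isChain_isInfix L).imp fun _ _ => Or.inl

def orient : Bool → List α → List α
  | false, l => l
  | true, l => l.reverse

@[simp] lemma orient_false (l : List α) : orient false l = l := rfl

@[simp] lemma orient_true (l : List α) : orient true l = l.reverse := rfl

@[simp] lemma mem_orient {e : Bool} : a ∈ orient e l ↔ a ∈ l := by cases e <;> simp

@[simp] lemma length_orient (e : Bool) (l : List α) : (orient e l).length = l.length := by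
  cases e <;> simp

@[simp] lemma nodup_orient {e : Bool} : (orient e l).Nodup ↔ l.Nodup := by cases e <;> simp

@[simp] lemma orient_singleton (e : Bool) (a : α) : orient e [a] = [a] := by cases e <;> rfl

@[simp] lemma orient_eq_nil {e : Bool} : orient e l = [] ↔ l = [] := by cases e <;> simp

lemma isChain_adjacent_orient {e : Bool} :
    (orient e l).IsChain (Adjacent L) ↔ l.IsChain (Adjacent L) := by
  cases e
  · rfl
  · simp only [orient_true, isChain_reverse]
    exact IsChain.iff fun _ _ => ⟨Adjacent.symm, Adjacent.symm⟩

lemma Nodup.getLast?_ne_head? (hl : l.Nodup) (h2 : 2 ≤ l.length) : l.getLast? ≠ l.head? := by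
  match l, hl, h2 with
  | a :: b :: r, hl, _ =>
    intro h
    rw [getLast?_cons_cons, head?_cons, getLast?_eq_some_getLast (by simp), Option.some_inj] at h
    exact (nodup_cons.mp hl).1 (h ▸ getLast_mem _)

lemma orient_injective (hl : l.Nodup) (h2 : 2 ≤ l.length) {e e' : Bool}
    (h : orient e l = orient e' l) : e = e' := by
  have hne : l.reverse ≠ l := fun h' =>
    hl.getLast?_ne_head? h2 (by rw [← head?_reverse, h'])
  cases e <;> cases e' <;> simp_all [eq_comm]

lemma IsChain.prefix_of_head?_eq (hL : L.Nodup) (hl : l.Nodup) (hchain : l.IsChain (Adjacent L))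
    (hhead : l.head? = L.head?) : l <+: L := by
  induction l generalizing L with
  | nil => exact nil_prefix
  | cons a l ih =>
    obtain ⟨L, rfl⟩ : ∃ L', L = a :: L' := by
      cases L <;> simp_all
    refine prefix_cons_inj a |>.mpr ?_
    cases l with
    | nil => exact nil_prefix
    | cons c l =>
      have ha : a ∉ c :: l := (nodup_cons.mp hl).1
      refine ih (nodup_cons.mp hL).2 (nodup_cons.mp hl).2 ?_ ?_
      · exact hchain.tail.imp_of_mem_imp fun b d hb hd hbd =>
          hbd.of_cons (fun h => ha (h ▸ hb)) (fun h => ha (h ▸ hd))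
      · exact ((isChain_cons_cons.mp hchain).1.head?_eq hL).symm

lemma exists_orient_prefix (hL : (x :: L).Nodup) (hl : l.Nodup)
    (hchain : l.IsChain (Adjacent (x :: L))) (hx : x ∈ l) : ∃ e, orient e l <+: x :: L := by
  obtain ⟨s, t, rfl⟩ := append_of_mem hx
  suffices s = [] ∨ t = [] by
    rcases this with rfl | rfl
    · exact ⟨false, hchain.prefix_of_head?_eq hL hl rfl⟩
    · refine ⟨true, IsChain.prefix_of_head?_eq hL (nodup_reverse.mpr hl) ?_ (by simp)⟩
      exact isChain_adjacent_orient (e := true) |>.mpr hchain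
  -- otherwise the neighbours `y` and `z` of `x` in `l` would both be the successor of `x` in `L`
  by_contra! hst
  obtain ⟨s, y, rfl⟩ := (eq_nil_or_concat' s).resolve_left hst.1
  obtain ⟨z, t, rfl⟩ := exists_cons_of_ne_nil hst.2
  have hrel := isChain_iff_forall_rel_of_append_cons_cons.mp hchain
  have hy := (hrel (a := y) (b := x) (l₁ := s) (l₂ := z :: t) (by simp)).symm.head?_eq hL
  have hz := (hrel (a := x) (b := z) (l₁ := s ++ [y]) (l₂ := t) (by simp)).head?_eq hL
  obtain rfl : y = z := Option.some_injective _ (hy.symm.trans hz)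
  simp [nodup_append] at hl

lemma pair_infix_iff :
    [a, b] <:+: l ↔ ∃ (k : ℕ) (h : k + 1 < l.length), l[k] = a ∧ l[k + 1] = b := by
  rw [infix_iff_getElem?]
  constructor
  · rintro ⟨k, hk, h⟩
    have h0 := h 0 (by simp)
    have h1 := h 1 (by simp)
    simp only [length_cons, length_nil] at hk
    refine ⟨k, by omega, ?_, ?_⟩
    · simpa [getElem?_eq_getElem (show k < l.length by omega)] using h0
    · simpa [getElem?_eq_getElem (show k + 1 < l.length by omega), add_comm] using h1
  · rintro ⟨k, hk, rfl, rfl⟩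
    refine ⟨k, by simp; omega, fun i hi => ?_⟩
    simp only [length_cons, length_nil] at hi
    interval_cases i <;> simp [add_comm]

lemma pair_infix_ofFn_iff {n : ℕ} {f : Fin n → α} :
    [a, b] <:+: ofFn f ↔
      ∃ (k : ℕ) (h : k + 1 < n), f ⟨k, by omega⟩ = a ∧ f ⟨k + 1, h⟩ = b := by
  simp [pair_infix_iff]

lemma pair_prefix_ofFn_iff {n : ℕ} [NeZero n] {f : Fin n → α} (hn : 1 < n) :
    [a, b] <+: ofFn f ↔ f 0 = a ∧ f 1 = b := by
  obtain ⟨n, rfl⟩ : ∃ k, n = k + 2 := ⟨n - 2, by omega⟩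
  simp [ofFn_succ, eq_comm]

end List

section BlockLayout

open List

variable {α ι : Type*}

structure IsBlockFamily (B : ι → List α) : Prop where
  nodup : ∀ i, (B i).Nodup
  ne_nil : ∀ i, B i ≠ []
  disjoint : Pairwise fun i j => (B i).Disjoint (B j)

def blockLayout (B : ι → List α) (ε : ι → Bool) (os : List ι) : List α :=
  os.flatMap fun i => orient (ε i) (B i)

variable {B : ι → List α} {ε ε' : ι → Bool} {os os' : List ι} {x : α} {i j : ι}

@[simp] lemma blockLayout_nil : blockLayout B ε [] = [] := rfl

lemma blockLayout_cons :
    blockLayout B ε (i :: os) = orient (ε i) (B i) ++ blockLayout B ε os :=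
  flatMap_cons

lemma mem_blockLayout : x ∈ blockLayout B ε os ↔ ∃ i ∈ os, x ∈ B i := by
  simp [blockLayout]

lemma orient_infix_blockLayout (hi : i ∈ os) : orient (ε i) (B i) <:+: blockLayout B ε os :=
  infix_of_mem_flatten (mem_map_of_mem hi)

lemma isChain_adjacent_blockLayout (hi : i ∈ os) :
    (B i).IsChain (Adjacent (blockLayout B ε os)) :=
  isChain_adjacent_orient.mp <| (isChain_adjacent_self _).imp fun _ _ h =>
    h.mono (orient_infix_blockLayout hi)

lemma blockLayout_congr (h : ∀ i ∈ os, orient (ε i) (B i) = orient (ε' i) (B i)) :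
    blockLayout B ε os = blockLayout B ε' os :=
  flatMap_congr h

namespace IsBlockFamily

lemma eq_of_mem (hB : IsBlockFamily B) (hi : x ∈ B i) (hj : x ∈ B j) : i = j := by
  by_contra h
  exact hB.disjoint h hi hj

lemma mem_of_mem_blockLayout (hB : IsBlockFamily B) (hi : x ∈ B i)
    (h : x ∈ blockLayout B ε os) : i ∈ os := by
  obtain ⟨j, hj, hxj⟩ := mem_blockLayout.mp h
  exact hB.eq_of_mem hi hxj ▸ hj

lemma nodup_blockLayout (hB : IsBlockFamily B) (hos : os.Nodup) :
    (blockLayout B ε os).Nodup :=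
  nodup_flatMap.mpr ⟨fun i _ => nodup_orient.mpr (hB.nodup i),
    hos.pairwise_of_forall_ne fun _ _ _ _ hij _ hi hj =>
      hB.disjoint hij (mem_orient.mp hi) (mem_orient.mp hj)⟩

lemma blockLayout_injective (hB : IsBlockFamily B)
    (h : blockLayout B ε os = blockLayout B ε' os') :
    os = os' ∧ ∀ i ∈ os, orient (ε i) (B i) = orient (ε' i) (B i) := by
  induction os generalizing os' with
  | nil =>
    cases os' with
    | nil => simp
    | cons j os' => simp [blockLayout_cons, hB.ne_nil] at h
  | cons i os ih =>
    cases os' with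
    | nil => simp [blockLayout_cons, hB.ne_nil] at h
    | cons j os' =>
      rw [blockLayout_cons, blockLayout_cons] at h
      have hi : orient (ε i) (B i) ≠ [] := by simpa using hB.ne_nil i
      have hj : orient (ε' j) (B j) ≠ [] := by simpa using hB.ne_nil j
      have hhead := congrArg head? h
      rw [head?_append_of_ne_nil _ hi, head?_append_of_ne_nil _ hj, head?_eq_some_head hi,
        head?_eq_some_head hj, Option.some_inj] at hhead
      obtain rfl : i = j := hB.eq_of_mem (mem_orient.mp (head_mem hi))
        (mem_orient.mp (hhead ▸ head_mem hj))
      obtain ⟨hblock, hrest⟩ := append_inj h (by simp)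
      obtain ⟨rfl, hos⟩ := ih hrest
      exact ⟨rfl, forall_mem_cons.mpr ⟨hblock, hos⟩⟩

theorem exists_eq_blockLayout (hB : IsBlockFamily B) (L : List α) (hL : L.Nodup)
    (hcover : ∀ x ∈ L, ∃ i, x ∈ B i)
    (hchain : ∀ i, ∀ x ∈ L, x ∈ B i → (B i).IsChain (Adjacent L)) :
    ∃ os ε, os.Nodup ∧ L = blockLayout B ε os := by
  match L with
  | [] => exact ⟨[], fun _ => false, nodup_nil, rfl⟩
  | x :: L =>
    obtain ⟨i, hxi⟩ := hcover x mem_cons_self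
    obtain ⟨e, L₂, hsplit⟩ := exists_orient_prefix hL (hB.nodup i)
      (hchain i x mem_cons_self hxi) hxi
    have hL₂ : L₂.Nodup := (hsplit ▸ hL).sublist (sublist_append_right _ _)
    have hdisj : ∀ y ∈ L₂, y ∉ B i := fun y hy hyi =>
      disjoint_of_nodup_append (hsplit ▸ hL) (mem_orient.mpr hyi) hy
    obtain ⟨os, ε, hos, rfl⟩ := exists_eq_blockLayout hB L₂ hL₂
      (fun y hy => hcover y (hsplit ▸ mem_append_right _ hy))
      (fun j y hy hyj => by
        have hji : j ≠ i := fun h => hdisj y hy (h ▸ hyj)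
        refine (hchain j y (hsplit ▸ mem_append_right _ hy) hyj).imp_of_mem_imp
          fun a b ha hb hab => (hsplit ▸ hab).of_append ?_ ?_
        · exact fun h => hB.disjoint hji ha (mem_orient.mp h)
        · exact fun h => hB.disjoint hji hb (mem_orient.mp h))
    have hi : i ∉ os := fun hi => by
      obtain ⟨y, hy⟩ := exists_mem_of_ne_nil _ (hB.ne_nil i)
      exact hdisj y (mem_blockLayout.mpr ⟨i, hi, hy⟩) hy
    refine ⟨i :: os, Function.update ε i e, nodup_cons.mpr ⟨hi, hos⟩, ?_⟩
    rw [← hsplit, blockLayout_cons, Function.update_self]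
    congr 1
    exact blockLayout_congr fun j hj => by
      rw [Function.update_of_ne (ne_of_mem_of_not_mem hj hi)]
termination_by L.length
decreasing_by
  rw [← hsplit, length_append, length_orient]
  exact Nat.lt_add_of_pos_left (length_pos_iff.mpr (hB.ne_nil i))

end IsBlockFamily

end BlockLayout

open scoped Fin.NatCast Fin.CommRing

variable {n : ℕ}

lemma Fin.mk_add_one_eq [NeZero n] {k : ℕ} (hk : k + 1 < n) :
    (⟨k + 1, hk⟩ : Fin n) = ⟨k, by omega⟩ + 1 :=
  Fin.ext (Fin.val_add_one_of_lt' (i := ⟨k, by omega⟩) hk).symm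

lemma exists_perm_ofFn_eq {L : List (Fin n)} (hL : L.Nodup) (hmem : ∀ x, x ∈ L) :
    ∃ σ : Equiv.Perm (Fin n), List.ofFn σ = L := by
  let e := hL.getEquivOfForallMemList L hmem
  have hlen : L.length = n := by simpa using Fintype.card_congr e
  refine ⟨(finCongr hlen.symm).trans e, List.ext_getElem (by simp [hlen]) fun _ _ _ => ?_⟩
  simp [e, List.Nodup.getEquivOfForallMemList]

def IsCycleEdge [NeZero n] (σ : Equiv.Perm (Fin n)) (e : Sym2 (Fin n)) : Prop :=
  ∃ i, e = s(σ i, σ (i + 1))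

section CycleEdge

variable [NeZero n] {σ τ : Equiv.Perm (Fin n)} {a b : Fin n}

lemma cycleVec_apply (σ : Equiv.Perm (Fin n)) (e : EdgeIdx n) :
    cycleVec n σ e = if IsCycleEdge σ e then 1 else 0 := by
  simp only [cycleVec, IsCycleEdge, finRotate_apply]
  congr

lemma xval_cycleVec_eq_one_iff :
    xval (cycleVec n σ) a b = 1 ↔ a ≠ b ∧ IsCycleEdge σ s(a, b) := by
  unfold xval
  split_ifs with h <;> simp [h, cycleVec_apply]

lemma isCycleEdge_of_cycleVec_eq (h : cycleVec n σ = cycleVec n τ) (hab : a ≠ b)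
    (he : IsCycleEdge σ s(a, b)) : IsCycleEdge τ s(a, b) :=
  (xval_cycleVec_eq_one_iff.mp (h ▸ xval_cycleVec_eq_one_iff.mpr ⟨hab, he⟩)).2

lemma isCycleEdge_addLeft_trans (c : Fin n) {e : Sym2 (Fin n)} :
    IsCycleEdge ((Equiv.addLeft c).trans σ) e ↔ IsCycleEdge σ e := by
  simp only [IsCycleEdge, Equiv.trans_apply, Equiv.coe_addLeft]
  constructor
  · rintro ⟨i, rfl⟩
    exact ⟨c + i, by rw [add_assoc]⟩
  · rintro ⟨i, rfl⟩
    exact ⟨i - c, by rw [add_sub_cancel, ← add_assoc, add_sub_cancel]⟩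

lemma isCycleEdge_subLeft_trans (c : Fin n) {e : Sym2 (Fin n)} :
    IsCycleEdge ((Equiv.subLeft c).trans σ) e ↔ IsCycleEdge σ e := by
  simp only [IsCycleEdge, Equiv.trans_apply, Equiv.subLeft_apply]
  constructor
  · rintro ⟨i, rfl⟩
    exact ⟨c - (i + 1), by rw [Sym2.eq_swap]; congr 3; ring⟩
  · rintro ⟨i, rfl⟩
    exact ⟨c - (i + 1), by rw [Sym2.eq_swap]; congr 3 <;> ring⟩

lemma cycleVec_congr (h : ∀ e, IsCycleEdge σ e ↔ IsCycleEdge τ e) :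
    cycleVec n σ = cycleVec n τ := by
  funext e
  simp only [cycleVec_apply, h]

lemma exists_cycleVec_eq_of_isCycleEdge (h : IsCycleEdge σ s(a, b)) :
    ∃ τ : Equiv.Perm (Fin n), cycleVec n τ = cycleVec n σ ∧ τ 0 = a ∧ τ 1 = b := by
  obtain ⟨i, hi⟩ := h
  rcases Sym2.eq_iff.mp hi with ⟨rfl, rfl⟩ | ⟨rfl, rfl⟩
  · exact ⟨(Equiv.addLeft i).trans σ, cycleVec_congr fun _ => isCycleEdge_addLeft_trans i,
      by simp, by simp⟩
  · exact ⟨(Equiv.subLeft (i + 1)).trans σ, cycleVec_congr fun _ => isCycleEdge_subLeft_trans _,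
      by simp, by simp⟩

lemma apply_add_one_add_one_eq_of_cycleVec_eq (h : cycleVec n σ = cycleVec n τ) {p : Fin n}
    (h0 : σ p = τ p) (h1 : σ (p + 1) = τ (p + 1)) : σ (p + 1 + 1) = τ (p + 1 + 1) := by
  by_cases hdiag : τ (p + 1) = τ (p + 1 + 1)
  · rw [← τ.injective hdiag, h1]
  obtain ⟨q, hq⟩ := isCycleEdge_of_cycleVec_eq h.symm hdiag ⟨p + 1, rfl⟩
  rcases Sym2.eq_iff.mp hq with ⟨hq1, hq2⟩ | ⟨hq1, hq2⟩
  · rw [hq2, σ.injective (hq1.symm.trans h1.symm)]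
  · have hqp : q = p := add_right_cancel (σ.injective (hq1.symm.trans h1.symm))
    have hp : p + 1 + 1 = p := τ.injective (hq2.trans (hqp ▸ h0))
    rw [hp, h0]

lemma eq_of_cycleVec_eq (h : cycleVec n σ = cycleVec n τ) (h0 : σ 0 = τ 0) (h1 : σ 1 = τ 1) :
    σ = τ := by
  have key : ∀ j : ℕ, σ j = τ j ∧ σ (j + 1) = τ (j + 1) := by
    intro j
    induction j with
    | zero => simpa using ⟨h0, h1⟩
    | succ j ih =>
      push_cast
      exact ⟨ih.2, apply_add_one_add_one_eq_of_cycleVec_eq h ih.1 ih.2⟩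
  ext i
  simpa using congrArg Fin.val (key i).1

lemma card_filter_hamX (hn : 1 < n) (P : (EdgeIdx n → ℝ) → Prop)
    (hP : ∀ x, P x → xval x a b = 1) :
    ((hamX n).filter P).card =
      (univ.filter fun σ : Equiv.Perm (Fin n) =>
        [a, b] <+: List.ofFn σ ∧ P (cycleVec n σ)).card := by
  symm
  rw [← card_image_of_injOn (f := cycleVec n)]
  · congr 1
    ext x
    simp only [hamX, mem_filter, mem_image, mem_univ, true_and]
    constructor
    · rintro ⟨σ, ⟨-, hσ⟩, rfl⟩
      exact ⟨⟨σ, rfl⟩, hσ⟩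
    · rintro ⟨⟨σ, rfl⟩, hx⟩
      obtain ⟨-, he⟩ := xval_cycleVec_eq_one_iff.mp (hP _ hx)
      obtain ⟨τ, hτ, h0, h1⟩ := exists_cycleVec_eq_of_isCycleEdge he
      exact ⟨τ, ⟨(List.pair_prefix_ofFn_iff hn).mpr ⟨h0, h1⟩, hτ ▸ hx⟩, hτ⟩
  · intro σ hσ τ hτ h
    simp only [coe_filter, mem_univ, true_and, List.pair_prefix_ofFn_iff hn] at hσ hτ
    exact eq_of_cycleVec_eq h (hσ.1.1.trans hτ.1.1.symm) (hσ.1.2.trans hτ.1.2.symm)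

lemma isCycleEdge_of_adjacent (h : (List.ofFn σ).Adjacent a b) : IsCycleEdge σ s(a, b) := by
  have key : ∀ {c d}, [c, d] <:+: List.ofFn σ → IsCycleEdge σ s(c, d) := by
    intro c d hcd
    obtain ⟨k, hk, rfl, rfl⟩ := List.pair_infix_ofFn_iff.mp hcd
    exact ⟨⟨k, by omega⟩, by rw [Fin.mk_add_one_eq hk]⟩
  rcases h with h | h
  · exact key h
  · exact Sym2.eq_swap ▸ key h

lemma adjacent_of_isCycleEdge (h : IsCycleEdge σ s(a, b)) (ha : a ≠ σ 0) (hb : b ≠ σ 0) :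
    (List.ofFn σ).Adjacent a b := by
  obtain ⟨i, hi⟩ := h
  have hi1 : i.val + 1 < n := by
    by_contra hge
    have : i + 1 = 0 := by
      ext
      rw [Fin.val_add, Fin.val_one', Nat.add_mod_mod, show i.val + 1 = n by omega, Nat.mod_self,
        Fin.val_zero]
    rcases Sym2.eq_iff.mp hi with ⟨-, rfl⟩ | ⟨rfl, -⟩
    · exact hb (by rw [this])
    · exact ha (by rw [this])
  have hpair : [σ i, σ (i + 1)] <:+: List.ofFn σ :=
    List.pair_infix_ofFn_iff.mpr ⟨i, hi1, rfl, by rw [Fin.mk_add_one_eq hi1]⟩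
  rcases Sym2.eq_iff.mp hi with ⟨rfl, rfl⟩ | ⟨rfl, rfl⟩
  · exact Or.inl hpair
  · exact Or.inr hpair

end CycleEdge

namespace DisjointPaths

variable {m : ℕ} {ks : Fin m → ℕ} (v : (i : Fin m) → Fin (ks i + 1) → Fin n)

def pathVertex (p : Σ i, Fin (ks i + 1)) : Fin n := v p.1 p.2

def pathVertices : Finset (Fin n) := univ.image (pathVertex v)

abbrev BlockIdx := Fin m ⊕ {x // x ∉ pathVertices v}

def pathBlocks : BlockIdx v → List (Fin n) :=
  Sum.elim (fun i => List.ofFn (v i)) fun x => [x.1]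

def ContainsPaths (x : EdgeIdx n → ℝ) : Prop :=
  ∀ (i : Fin m) (t : Fin (ks i)), xval x (v i t.castSucc) (v i t.succ) = 1

variable {v}

lemma isBlockFamily_pathBlocks (hv : Function.Injective (pathVertex v)) :
    IsBlockFamily (pathBlocks v) where
  nodup o := by
    rcases o with i | x
    · exact List.nodup_ofFn.mpr fun s t h => by
        simpa using hv (a₁ := ⟨i, s⟩) (a₂ := ⟨i, t⟩) h
    · exact List.nodup_singleton _
  ne_nil o := by rcases o with i | x <;> simp [pathBlocks]
  disjoint o o' hne y hy hy' := by
    rcases o with i | x <;> rcases o' with j | x' <;>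
      simp only [pathBlocks, Sum.elim_inl, Sum.elim_inr, List.mem_ofFn, List.mem_singleton]
        at hy hy'
    · obtain ⟨s, rfl⟩ := hy
      obtain ⟨t, ht⟩ := hy'
      have hji := congrArg Sigma.fst (hv (a₁ := ⟨j, t⟩) (a₂ := ⟨i, s⟩) ht)
      exact hne (congrArg Sum.inl hji.symm)
    · obtain ⟨s, rfl⟩ := hy
      exact x'.2 (hy' ▸ mem_image_of_mem _ (mem_univ (⟨i, s⟩ : Σ i, Fin (ks i + 1))))
    · obtain ⟨t, rfl⟩ := hy'
      exact x.2 (hy ▸ mem_image_of_mem _ (mem_univ (⟨j, t⟩ : Σ i, Fin (ks i + 1))))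
    · exact hne (congrArg Sum.inr (Subtype.ext (hy.symm.trans hy')))

lemma exists_mem_pathBlocks (y : Fin n) : ∃ o, y ∈ pathBlocks v o := by
  by_cases hy : y ∈ pathVertices v
  · obtain ⟨⟨i, t⟩, -, rfl⟩ := mem_image.mp hy
    exact ⟨Sum.inl i, List.mem_ofFn.mpr ⟨t, rfl⟩⟩
  · exact ⟨Sum.inr ⟨y, hy⟩, List.mem_singleton_self _⟩

lemma card_blockIdx (hv : Function.Injective (pathVertex v)) :
    Fintype.card (BlockIdx v) = m + (n - (∑ i, ks i + m)) := by
  rw [Fintype.card_sum, Fintype.card_fin, Fintype.card_subtype_compl, Fintype.card_fin,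
    Fintype.card_coe, pathVertices, card_image_of_injective _ hv, card_univ, Fintype.card_sigma]
  simp [sum_add_distrib]

lemma containsPaths_cycleVec_iff [NeZero n] (hv : Function.Injective (pathVertex v))
    {σ : Equiv.Perm (Fin n)} :
    ContainsPaths v (cycleVec n σ) ↔
      ∀ i, (List.ofFn (v i)).IsChain fun a b => IsCycleEdge σ s(a, b) := by
  simp only [ContainsPaths, List.isChain_ofFn, xval_cycleVec_eq_one_iff]
  refine forall_congr' fun i =>
    ⟨fun h j hj => (h ⟨j, by omega⟩).2, fun h t => ⟨fun heq => ?_, h t (by omega)⟩⟩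
  simpa [Fin.ext_iff] using hv (a₁ := ⟨i, t.castSucc⟩) (a₂ := ⟨i, t.succ⟩) heq

lemma ContainsPaths.xval_apply_zero_apply_one [NeZero m] (hks : ∀ i, 1 ≤ ks i)
    {x : EdgeIdx n → ℝ} (h : ContainsPaths v x) : xval x (v 0 0) (v 0 1) = 1 := by
  have h1 : (1 : Fin (ks 0 + 1)) = Fin.succ ⟨0, hks 0⟩ :=
    Fin.ext (Nat.mod_eq_of_lt (Nat.lt_add_of_pos_left (hks 0)))
  rw [h1]
  exact h 0 ⟨0, hks 0⟩

section Rooted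

variable [NeZero m]

lemma eq_zero_of_apply_eq_apply_zero_zero (hv : Function.Injective (pathVertex v)) {i : Fin m}
    {t : Fin (ks i + 1)} (h : v i t = v 0 0) : i = 0 ∧ t.val = 0 := by
  have := hv (a₁ := ⟨i, t⟩) (a₂ := ⟨0, 0⟩) h
  simp only [Sigma.mk.injEq] at this
  obtain ⟨rfl, ht⟩ := this
  exact ⟨rfl, by simpa using congrArg Fin.val (eq_of_heq ht)⟩

lemma isChain_adjacent_of_containsPaths [NeZero n] (hv : Function.Injective (pathVertex v))
    {σ : Equiv.Perm (Fin n)} (hσ : [v 0 0, v 0 1] <+: List.ofFn σ)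
    (h : ContainsPaths v (cycleVec n σ)) (i : Fin m) :
    (List.ofFn (v i)).IsChain (List.Adjacent (List.ofFn σ)) := by
  have hpath := (containsPaths_cycleVec_iff hv).mp h i
  rw [List.isChain_ofFn] at hpath ⊢
  intro j hj
  by_cases h0 : i = 0 ∧ j = 0
  · obtain ⟨rfl, rfl⟩ := h0
    have h1 : (⟨0 + 1, hj⟩ : Fin (ks 0 + 1)) = 1 := Fin.ext (Nat.mod_eq_of_lt hj).symm
    rw [h1]
    exact Or.inl hσ.isInfix
  · have hn : 2 ≤ n := by simpa using hσ.length_le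
    have hσ0 : σ 0 = v 0 0 := ((List.pair_prefix_ofFn_iff hn).mp hσ).1
    refine adjacent_of_isCycleEdge (hpath j hj) (fun h => h0 ?_) (fun h => ?_)
    · exact eq_zero_of_apply_eq_apply_zero_zero hv (h.trans hσ0)
    · exact absurd (eq_zero_of_apply_eq_apply_zero_zero hv (h.trans hσ0)).2 (by simp)

variable (v)

def arrangement (ε : Fin m → Bool) (os : List (BlockIdx v)) : List (Fin n) :=
  blockLayout (pathBlocks v) (Sum.elim ε fun _ => false) (Sum.inl 0 :: os)

def otherBlocks : List (BlockIdx v) := (univ.erase (Sum.inl 0)).toList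

def arrangementParams : Finset ((Fin m → Bool) × List (BlockIdx v)) :=
  (univ.filter fun ε : Fin m → Bool => ε 0 = false) ×ˢ (otherBlocks v).permutations.toFinset

def rootedCycles [NeZero n] : Finset (Equiv.Perm (Fin n)) :=
  univ.filter fun σ => [v 0 0, v 0 1] <+: List.ofFn σ ∧ ContainsPaths v (cycleVec n σ)

variable {v}

lemma mem_arrangementParams {p : (Fin m → Bool) × List (BlockIdx v)} :
    p ∈ arrangementParams v ↔ p.1 0 = false ∧ p.2.Perm (otherBlocks v) := by
  simp [arrangementParams]

lemma nodup_otherBlocks : (otherBlocks v).Nodup := nodup_toList _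

lemma nodup_cons_zero {os : List (BlockIdx v)} (h : os.Perm (otherBlocks v)) :
    (Sum.inl 0 :: os).Nodup := by
  refine List.nodup_cons.mpr ⟨fun h0 => ?_, h.nodup_iff.mpr nodup_otherBlocks⟩
  simpa [otherBlocks] using h.subset h0

lemma mem_cons_zero {os : List (BlockIdx v)} (h : os.Perm (otherBlocks v)) (o : BlockIdx v) :
    o ∈ Sum.inl 0 :: os := by
  by_cases ho : o = Sum.inl 0
  · exact ho ▸ List.mem_cons_self
  · exact List.mem_cons_of_mem _ (h.mem_iff.mpr (by simp [otherBlocks, ho]))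

lemma nodup_arrangement (hv : Function.Injective (pathVertex v)) (ε : Fin m → Bool)
    {os : List (BlockIdx v)} (hos : os.Perm (otherBlocks v)) : (arrangement v ε os).Nodup :=
  (isBlockFamily_pathBlocks hv).nodup_blockLayout (nodup_cons_zero hos)

lemma mem_arrangement (ε : Fin m → Bool) {os : List (BlockIdx v)}
    (hos : os.Perm (otherBlocks v)) (y : Fin n) : y ∈ arrangement v ε os := by
  obtain ⟨o, hy⟩ := exists_mem_pathBlocks (v := v) y
  exact mem_blockLayout.mpr ⟨o, mem_cons_zero hos o, hy⟩

lemma arrangement_eq_ofFn_append {ε : Fin m → Bool} (hε : ε 0 = false)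
    (os : List (BlockIdx v)) :
    arrangement v ε os =
      List.ofFn (v 0) ++ blockLayout (pathBlocks v) (Sum.elim ε fun _ => false) os := by
  simp [arrangement, blockLayout_cons, hε, pathBlocks]

lemma card_arrangementParams (hv : Function.Injective (pathVertex v))
    (hkm : ∑ i, ks i + m ≤ n) :
    (arrangementParams v).card = 2 ^ (m - 1) * (n - ∑ i, ks i - 1).factorial := by
  rw [arrangementParams, card_product]
  congr 1
  · rw [← Fintype.piFinset_univ,
      Fintype.card_filter_piFinset_const_eq_of_mem _ _ (mem_univ false)]
    simp
  · rw [List.toFinset_card_of_nodup (List.nodup_permutations _ nodup_otherBlocks),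
      List.length_permutations, otherBlocks, length_toList, card_erase_of_mem (mem_univ _),
      card_univ, card_blockIdx hv]
    congr 1
    omega

lemma injOn_arrangement (hv : Function.Injective (pathVertex v)) (hks : ∀ i, 1 ≤ ks i) :
    Set.InjOn (fun p : (Fin m → Bool) × List (BlockIdx v) => arrangement v p.1 p.2)
      (arrangementParams v) := by
  rintro ⟨ε, os⟩ hp ⟨ε', os'⟩ - h
  have hB := isBlockFamily_pathBlocks hv
  obtain ⟨hos, horient⟩ := hB.blockLayout_injective h
  refine Prod.ext (funext fun i => ?_) (List.cons.inj hos).2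
  exact List.orient_injective (hB.nodup (Sum.inl i)) (by simpa [pathBlocks] using hks i)
    (horient (Sum.inl i) (mem_cons_zero (mem_arrangementParams.mp hp).2 _))

lemma exists_mem_rootedCycles_ofFn_eq [NeZero n] (hv : Function.Injective (pathVertex v))
    (hks : ∀ i, 1 ≤ ks i) {p : (Fin m → Bool) × List (BlockIdx v)}
    (hp : p ∈ arrangementParams v) :
    ∃ σ ∈ rootedCycles v, List.ofFn σ = arrangement v p.1 p.2 := by
  obtain ⟨hε, hos⟩ := mem_arrangementParams.mp hp
  obtain ⟨σ, hσ⟩ :=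
    exists_perm_ofFn_eq (nodup_arrangement hv p.1 hos) (mem_arrangement p.1 hos)
  refine ⟨σ, mem_filter.mpr ⟨mem_univ _, ?_, ?_⟩, hσ⟩
  · rw [hσ, arrangement_eq_ofFn_append hε]
    exact ((List.pair_prefix_ofFn_iff (Nat.lt_add_of_pos_left (hks 0))).mpr ⟨rfl, rfl⟩).trans
      (List.prefix_append _ _)
  · exact (containsPaths_cycleVec_iff hv).mpr fun i =>
      (isChain_adjacent_blockLayout (mem_cons_zero hos (Sum.inl i))).imp fun a b hab =>
        isCycleEdge_of_adjacent (hσ ▸ hab)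

lemma exists_nodup_ofFn_eq_blockLayout [NeZero n] (hv : Function.Injective (pathVertex v))
    {σ : Equiv.Perm (Fin n)} (hσ : σ ∈ rootedCycles v) :
    ∃ os ε, os.Nodup ∧ (∀ o, o ∈ os) ∧
      List.ofFn σ = blockLayout (pathBlocks v) ε os := by
  obtain ⟨-, hσ, hc⟩ := mem_filter.mp hσ
  have hB := isBlockFamily_pathBlocks hv
  obtain ⟨os, ε, hos, hL⟩ := hB.exists_eq_blockLayout (List.ofFn σ)
    (List.nodup_ofFn.mpr σ.injective) (fun y _ => exists_mem_pathBlocks y) fun o _ _ _ => by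
      rcases o with i | x
      · exact isChain_adjacent_of_containsPaths hv hσ hc i
      · exact List.isChain_singleton _
  refine ⟨os, ε, hos, fun o => ?_, hL⟩
  obtain ⟨y, hy⟩ := List.exists_mem_of_ne_nil _ (hB.ne_nil o)
  exact hB.mem_of_mem_blockLayout hy (hL ▸ List.mem_ofFn.mpr ⟨σ.symm y, by simp⟩)

lemma eq_inl_zero_of_ofFn_eq_blockLayout_cons [NeZero n]
    (hv : Function.Injective (pathVertex v)) (hks : ∀ i, 1 ≤ ks i) {σ : Equiv.Perm (Fin n)}
    (hσ : [v 0 0, v 0 1] <+: List.ofFn σ) {ε : BlockIdx v → Bool} {o : BlockIdx v}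
    {os : List (BlockIdx v)} (hL : List.ofFn σ = blockLayout (pathBlocks v) ε (o :: os)) :
    o = Sum.inl 0 ∧ ε o = false := by
  have hB := isBlockFamily_pathBlocks hv
  obtain ⟨l, hl⟩ := hσ
  rw [blockLayout_cons] at hL
  have hhead : (List.orient (ε o) (pathBlocks v o)).head? = some (v 0 0) := by
    rw [← List.head?_append_of_ne_nil _ (by simpa using hB.ne_nil o), ← hL, ← hl]
    rfl
  obtain rfl : o = Sum.inl 0 := hB.eq_of_mem
    (List.mem_orient.mp (List.mem_of_mem_head? hhead)) (List.mem_ofFn.mpr ⟨0, rfl⟩)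
  refine ⟨rfl, ?_⟩
  rw [← Bool.not_eq_true]
  intro h
  rw [h, List.orient_true, List.head?_reverse] at hhead
  refine (hB.nodup (Sum.inl 0)).getLast?_ne_head? (by simpa [pathBlocks] using hks 0) ?_
  rw [hhead]
  simp [pathBlocks]

lemma exists_arrangement_eq_ofFn [NeZero n] (hv : Function.Injective (pathVertex v))
    (hks : ∀ i, 1 ≤ ks i) {σ : Equiv.Perm (Fin n)} (hσ : σ ∈ rootedCycles v) :
    ∃ p ∈ arrangementParams v, arrangement v p.1 p.2 = List.ofFn σ := by
  obtain ⟨os, ε, hos, hall, hL⟩ := exists_nodup_ofFn_eq_blockLayout hv hσ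
  obtain ⟨o, os, rfl⟩ : ∃ o os', os = o :: os' := by
    cases os with
    | nil => exact absurd (hall (Sum.inl 0)) List.not_mem_nil
    | cons o os => exact ⟨o, os, rfl⟩
  obtain ⟨rfl, hε⟩ :=
    eq_inl_zero_of_ofFn_eq_blockLayout_cons hv hks (mem_filter.mp hσ).2.1 hL
  refine ⟨(Function.update (fun i => ε (Sum.inl i)) 0 false, os),
    mem_arrangementParams.mpr ⟨by simp, ?_⟩, ?_⟩
  · refine (List.perm_ext_iff_of_nodup (List.nodup_cons.mp hos).2 nodup_otherBlocks).mpr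
      fun o => ?_
    simp only [otherBlocks, mem_toList, mem_erase, mem_univ, and_true]
    exact ⟨fun ho h => (List.nodup_cons.mp hos).1 (h ▸ ho),
      fun h => (List.mem_cons.mp (hall o)).resolve_left h⟩
  · rw [hL, arrangement]
    refine blockLayout_congr fun o _ => ?_
    rcases o with i | x
    · by_cases hi : i = 0
      · subst hi
        simp [hε]
      · simp [hi]
    · simp [pathBlocks]

lemma card_rootedCycles [NeZero n] (hv : Function.Injective (pathVertex v))
    (hks : ∀ i, 1 ≤ ks i) (hkm : ∑ i, ks i + m ≤ n) :
    (rootedCycles v).card = 2 ^ (m - 1) * (n - ∑ i, ks i - 1).factorial := by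
  rw [← card_arrangementParams hv hkm, ← card_image_of_injOn (injOn_arrangement hv hks),
    ← card_image_of_injective _ (List.ofFn_injective.comp DFunLike.coe_injective)]
  congr 1
  ext L
  simp only [mem_image]
  constructor
  · rintro ⟨σ, hσ, rfl⟩
    exact exists_arrangement_eq_ofFn hv hks hσ
  · rintro ⟨p, hp, rfl⟩
    exact exists_mem_rootedCycles_ofFn_eq hv hks hp

end Rooted

end DisjointPaths

open DisjointPaths in
theorem count_hamiltonian_cycles_containing_disjoint_paths_general
    (n k m : ℕ) (hk : 1 ≤ k) (hm : 1 ≤ m)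
    (ks : Fin m → ℕ) (hks : ∀ i, 1 ≤ ks i) (hsum : ∑ i, ks i = k)
    (hkm : k + m ≤ n)
    (v : (i : Fin m) → Fin (ks i + 1) → Fin n)
    (hv : Function.Injective (fun p : Σ i : Fin m, Fin (ks i + 1) => v p.1 p.2)) :
    ((hamX n).filter (fun x => ∀ (i : Fin m) (t : Fin (ks i)),
        xval x (v i t.castSucc) (v i t.succ) = 1)).card
      = 2 ^ (m - 1) * Nat.factorial (n - k - 1) := by
  have : NeZero m := ⟨by omega⟩
  have : NeZero n := ⟨by omega⟩
  subst hsum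
  convert (card_filter_hamX (by omega) (ContainsPaths v) fun x hx =>
    hx.xval_apply_zero_apply_one hks).trans (card_rootedCycles hv hks hkm) using 3
  exact Iff.rfl

/-- Let `(k_1, …, k_m)` be a partition of `k` into `m` positive parts
with `k + m ≤ n`, and let `p_1, …, p_m` be pairwise vertex-disjoint paths in `K_n`
with `k_1, …, k_m` edges respectively (path `i` visits the distinct vertices
`v i 0, v i 1, …, v i (k_i)`).  Then the number of Hamiltonian cycles of `K_n`
containing all of the paths `p_1, …, p_m` equals `2^(m-1) * (n - k - 1)!`. -/
theorem count_hamiltonian_cycles_containing_disjoint_paths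
    (n k m : ℕ) (hn : 1 ≤ n) (hk : 1 ≤ k) (hm : 1 ≤ m)
    (ks : Fin m → ℕ) (hks : ∀ i, 1 ≤ ks i) (hsum : ∑ i, ks i = k)
    (hkm : k + m ≤ n)
    (v : (i : Fin m) → Fin (ks i + 1) → Fin n)
    (hv : Function.Injective (fun p : Σ i : Fin m, Fin (ks i + 1) => v p.1 p.2)) :
    ((hamX n).filter (fun x => ∀ (i : Fin m) (t : Fin (ks i)),
        xval x (v i t.castSucc) (v i t.succ) = 1)).card
      = 2 ^ (m - 1) * Nat.factorial (n - k - 1) :=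
  count_hamiltonian_cycles_containing_disjoint_paths_general n k m hk hm ks hks hsum hkm v hv
end
end

section
/- Fix n ≥ 3, a positive integer k, y ∈ X, and f ∈ P_k. Suppose p_1, ..., p_m are polynomials of degree at most k on ℝ^{n(n-1)/2}, each taking only the values 0 or 1 on X, and suppose there exist real constants 0 < b_k < c_k such that for every unordered pair {i,j} with i ≠ j: Σ_{x∈X, x contains edge {i,j}} Σ_{ℓ=1}^{m} p_ℓ(x) equals b_k if {i,j} is not an edge of y, and equals c_k if {i,j} is an edge of y. Then f(y) ≥ -b_k(n-1)/(2(c_k - b_k)). -/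
/-!
The symmetric group on the vertices acts transitively on the edges of `K_n` and preserves `X`,
so `∑_{x ∈ X} x` is a constant vector; as every Hamiltonian cycle has `n` of the `n(n-1)/2`
edges, the average condition on `F` forces `F 𝟙 = (n-1)/2`. Since `p_ℓ² = p_ℓ` on `X`,
positivity of `F` gives `0 ≤ ∑_{x ∈ X} F(x) ∑_ℓ p_ℓ(x) = F (∑_{x ∈ X} (∑_ℓ p_ℓ(x)) • x)`, and the
counting hypothesis says exactly that this last vector is `b • 𝟙 + (c - b) • y`.
Hence `0 ≤ b (n-1)/2 + (c - b) F(y)`.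
-/

open Finset
noncomputable section
open scoped Classical

/-- A function `f : X → ℝ` belongs to `P_k` iff it is the restriction to `X` of a
linear function `F` on `ℝ^{n(n-1)/2}` with average value `1` on `X` such that
`(1/|X|) Σ_{x∈X} F(x) h(x)² ≥ 0` for every polynomial `h` of degree at most `k`. -/
def memP (n k : ℕ) (F : (EdgeIdx n → ℝ) →ₗ[ℝ] ℝ) : Prop :=
  ((hamX n).card : ℝ)⁻¹ * ∑ x ∈ hamX n, F x = 1 ∧
  ∀ h : MvPolynomial (EdgeIdx n) ℝ, h.totalDegree ≤ k →
    0 ≤ ((hamX n).card : ℝ)⁻¹ * ∑ x ∈ hamX n, F x * (MvPolynomial.eval x h) ^ 2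

lemma finRotate_apply_ne_self {n : ℕ} (hn : 2 ≤ n) (i : Fin n) : finRotate n i ≠ i :=
  Equiv.Perm.mem_support.1 (support_finRotate_of_le hn ▸ mem_univ i)

lemma finRotate_finRotate_apply_ne_self {n : ℕ} (hn : 3 ≤ n) (i : Fin n) :
    finRotate n (finRotate n i) ≠ i := by
  obtain ⟨m, rfl⟩ : ∃ m, n = m + 3 := ⟨n - 3, by omega⟩
  rw [finRotate_apply, finRotate_apply, add_assoc, Ne, add_eq_left, Fin.ext_iff]
  simp [Fin.val_add, Nat.mod_eq_of_lt (show 2 < m + 3 by omega)]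

lemma exists_perm_apply_eq_apply_eq {α : Type*} [DecidableEq α] {a b c d : α} (hab : a ≠ b)
    (hcd : c ≠ d) : ∃ τ : Equiv.Perm α, τ a = c ∧ τ b = d := by
  refine ⟨(Equiv.swap a c).trans (Equiv.swap (Equiv.swap a c b) d), ?_, by simp⟩
  rw [Equiv.trans_apply, Equiv.swap_apply_left]
  refine Equiv.swap_apply_of_ne_of_ne (fun h => hab ?_) hcd
  rw [eq_comm, Equiv.swap_apply_eq_iff, Equiv.swap_apply_right] at h
  exact h.symm

lemma sum_smul_apply_eq_sum_filter {E : Type*} {X : Finset (E → ℝ)}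
    (hX : ∀ x ∈ X, ∀ e, x e = 0 ∨ x e = 1) (g : (E → ℝ) → ℝ) (e : E) :
    (∑ x ∈ X, g x • x) e = ∑ x ∈ X with x e = 1, g x := by
  rw [Finset.sum_apply, sum_filter]
  refine sum_congr rfl fun x hx => ?_
  rcases hX x hx e with h | h <;> simp [h]

section HamiltonianCycles

variable {n : ℕ}

lemma cycleVec_eq_zero_or_one (σ : Equiv.Perm (Fin n)) (e : EdgeIdx n) :
    cycleVec n σ e = 0 ∨ cycleVec n σ e = 1 := by
  unfold cycleVec; split_ifs <;> simp

lemma apply_eq_zero_or_one_of_mem_hamX {x : EdgeIdx n → ℝ} (hx : x ∈ hamX n) (e : EdgeIdx n) :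
    x e = 0 ∨ x e = 1 := by
  obtain ⟨σ, -, rfl⟩ := mem_image.1 hx
  exact cycleVec_eq_zero_or_one σ e

lemma hamX_nonempty : (hamX n).Nonempty := univ_nonempty.image _

def cycleEdge (hn : 2 ≤ n) (σ : Equiv.Perm (Fin n)) (i : Fin n) : EdgeIdx n :=
  ⟨s(σ i, σ (finRotate n i)), by
    simpa [Sym2.mk_isDiag_iff, eq_comm] using finRotate_apply_ne_self hn i⟩

lemma cycleEdge_injective (hn : 3 ≤ n) (σ : Equiv.Perm (Fin n)) :
    Function.Injective (cycleEdge (by omega) σ) := by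
  intro i j hij
  rcases Sym2.eq_iff.1 (congrArg Subtype.val hij) with ⟨h, -⟩ | ⟨h₁, h₂⟩
  · exact σ.injective h
  · refine absurd ?_ (finRotate_finRotate_apply_ne_self hn i)
    rw [σ.injective h₂, ← σ.injective h₁]

lemma sum_cycleVec (hn : 3 ≤ n) (σ : Equiv.Perm (Fin n)) : ∑ e, cycleVec n σ e = n := by
  have hsupp : ({e | ∃ i, (e : Sym2 (Fin n)) = s(σ i, σ (finRotate n i))} : Finset (EdgeIdx n))
      = univ.image (cycleEdge (by omega) σ) := by
    ext e
    simp [cycleEdge, Subtype.ext_iff, eq_comm]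
  simp only [cycleVec, sum_boole, hsupp, card_image_of_injective _ (cycleEdge_injective hn σ),
    card_univ, Fintype.card_fin]

def relabelEdge (τ : Equiv.Perm (Fin n)) : Equiv.Perm (EdgeIdx n) where
  toFun e := ⟨e.1.map τ, (Sym2.isDiag_map τ.injective).not.2 e.2⟩
  invFun e := ⟨e.1.map τ.symm, (Sym2.isDiag_map τ.symm.injective).not.2 e.2⟩
  left_inv e := by ext; simp [Sym2.map_map]
  right_inv e := by ext; simp [Sym2.map_map]

@[simp]
lemma coe_relabelEdge (τ : Equiv.Perm (Fin n)) (e : EdgeIdx n) :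
    (relabelEdge τ e : Sym2 (Fin n)) = e.1.map τ := rfl

lemma cycleVec_comp_relabelEdge (σ τ : Equiv.Perm (Fin n)) :
    cycleVec n σ ∘ relabelEdge τ = cycleVec n (τ⁻¹ * σ) := by
  ext e
  have hmap : ∀ a b, Sym2.map τ e = s(a, b) ↔ (e : Sym2 (Fin n)) = s(τ⁻¹ a, τ⁻¹ b) := by
    intro a b
    rw [← (Sym2.map.injective τ.injective).eq_iff (b := s(τ⁻¹ a, τ⁻¹ b)), Sym2.map_mk]
    simp
  simp only [cycleVec, Function.comp_apply, coe_relabelEdge, hmap, Equiv.Perm.coe_mul]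
  rfl

lemma comp_relabelEdge_mem_hamX {x : EdgeIdx n → ℝ} (hx : x ∈ hamX n)
    (τ : Equiv.Perm (Fin n)) : x ∘ relabelEdge τ ∈ hamX n := by
  obtain ⟨σ, -, rfl⟩ := mem_image.1 hx
  rw [cycleVec_comp_relabelEdge]
  exact mem_image_of_mem _ (mem_univ _)

lemma sum_hamX_apply_relabelEdge (τ : Equiv.Perm (Fin n)) (e : EdgeIdx n) :
    ∑ x ∈ hamX n, x (relabelEdge τ e) = ∑ x ∈ hamX n, x e := by
  refine sum_nbij' (· ∘ relabelEdge τ) (· ∘ relabelEdge τ⁻¹) (fun x hx => ?_) (fun x hx => ?_)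
    (fun x _ => ?_) (fun x _ => ?_) (fun _ _ => rfl)
  · exact comp_relabelEdge_mem_hamX hx τ
  · exact comp_relabelEdge_mem_hamX hx τ⁻¹
  · ext e; exact congrArg x ((relabelEdge τ).apply_symm_apply e)
  · ext e; exact congrArg x ((relabelEdge τ).symm_apply_apply e)

lemma exists_relabelEdge_eq (e e' : EdgeIdx n) : ∃ τ, relabelEdge τ e = e' := by
  obtain ⟨z, hz⟩ := e
  obtain ⟨z', hz'⟩ := e'
  induction z using Sym2.ind with | _ a b => ?_
  induction z' using Sym2.ind with | _ c d => ?_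
  rw [Sym2.mk_isDiag_iff] at hz hz'
  obtain ⟨τ, hτa, hτb⟩ := exists_perm_apply_eq_apply_eq hz hz'
  exact ⟨τ, Subtype.ext (by simp [hτa, hτb])⟩

lemma sum_hamX_apply_eq (e e' : EdgeIdx n) :
    ∑ x ∈ hamX n, x e = ∑ x ∈ hamX n, x e' := by
  obtain ⟨τ, rfl⟩ := exists_relabelEdge_eq e e'
  exact (sum_hamX_apply_relabelEdge τ e).symm

lemma sub_one_mul_sum_hamX_apply (hn : 3 ≤ n) (e : EdgeIdx n) :
    ((n : ℝ) - 1) * ∑ x ∈ hamX n, x e = 2 * #(hamX n) := by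
  have hrow : ∀ x ∈ hamX n, ∑ e', x e' = (n : ℝ) := by
    intro x hx
    obtain ⟨σ, -, rfl⟩ := mem_image.1 hx
    exact sum_cycleVec hn σ
  have hdouble : ∑ e' : EdgeIdx n, ∑ x ∈ hamX n, x e' = n * #(hamX n) := by
    rw [sum_comm, sum_congr rfl hrow, sum_const, nsmul_eq_mul, mul_comm]
  rw [sum_congr rfl fun e' _ => sum_hamX_apply_eq e' e, sum_const, card_univ,
    Sym2.card_subtype_not_diag, Fintype.card_fin, nsmul_eq_mul, Nat.cast_choose_two] at hdouble
  have hn₀ : (n : ℝ) ≠ 0 := by norm_cast; omega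
  apply mul_left_cancel₀ hn₀
  linear_combination 2 * hdouble

lemma linearMap_apply_one_of_average_hamX_eq_one (hn : 3 ≤ n)
    {F : (EdgeIdx n → ℝ) →ₗ[ℝ] ℝ} (hF : ((hamX n).card : ℝ)⁻¹ * ∑ x ∈ hamX n, F x = 1) :
    F 1 = ((n : ℝ) - 1) / 2 := by
  let e : EdgeIdx n := cycleEdge (by omega) 1 ⟨0, by omega⟩
  set t := ∑ x ∈ hamX n, x e
  have hsum : ∑ x ∈ hamX n, x = t • 1 := by
    ext e'
    simp [Finset.sum_apply, t, sum_hamX_apply_eq e' e]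
  have hX : (0 : ℝ) < #(hamX n) := by exact_mod_cast hamX_nonempty.card_pos
  have htF : t * F 1 = #(hamX n) := by
    rw [← smul_eq_mul, ← map_smul, ← hsum, map_sum]
    field_simp at hF
    exact hF
  have htn : ((n : ℝ) - 1) * t = 2 * #(hamX n) := sub_one_mul_sum_hamX_apply hn e
  have ht : t ≠ 0 := by
    rintro ht
    rw [ht, mul_zero] at htn
    linarith
  apply mul_left_cancel₀ ht
  linear_combination htF - htn / 2

lemma memP.sum_mul_eval_nonneg {k : ℕ} {F : (EdgeIdx n → ℝ) →ₗ[ℝ] ℝ} (hF : memP n k F)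
    {p : MvPolynomial (EdgeIdx n) ℝ} (hp : p.totalDegree ≤ k)
    (h01 : ∀ x ∈ hamX n, MvPolynomial.eval x p = 0 ∨ MvPolynomial.eval x p = 1) :
    0 ≤ ∑ x ∈ hamX n, F x * MvPolynomial.eval x p := by
  have hsq : ∀ x ∈ hamX n, F x * MvPolynomial.eval x p ^ 2 = F x * MvPolynomial.eval x p := by
    intro x hx
    rcases h01 x hx with h | h <;> simp [h]
  have h := hF.2 p hp
  rwa [sum_congr rfl hsq, mul_nonneg_iff_of_pos_left (by simpa using hamX_nonempty.card_pos)]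
    at h

end HamiltonianCycles

theorem lower_bound_from_indicator_polynomials_general
    (n k m : ℕ) (hn : 3 ≤ n)
    (F : (EdgeIdx n → ℝ) →ₗ[ℝ] ℝ) (hF : memP n k F)
    (y : EdgeIdx n → ℝ) (hy : y ∈ hamX n)
    (ps : Fin m → MvPolynomial (EdgeIdx n) ℝ)
    (hdeg : ∀ ℓ, (ps ℓ).totalDegree ≤ k)
    (h01 : ∀ x ∈ hamX n, ∀ ℓ,
      MvPolynomial.eval x (ps ℓ) = 0 ∨ MvPolynomial.eval x (ps ℓ) = 1)
    (b c : ℝ) (hbc : b < c)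
    (hcount : ∀ e : EdgeIdx n,
      (∑ x ∈ (hamX n).filter (fun x => x e = 1), ∑ ℓ, MvPolynomial.eval x (ps ℓ))
        = if y e = 1 then c else b) :
    -(b * ((n : ℝ) - 1) / (2 * (c - b))) ≤ F y := by
  set g : (EdgeIdx n → ℝ) → ℝ := fun x => ∑ ℓ, MvPolynomial.eval x (ps ℓ)
  have hnonneg : 0 ≤ ∑ x ∈ hamX n, F x * g x := by
    simp only [g, mul_sum]
    rw [sum_comm]
    exact sum_nonneg fun ℓ _ => hF.sum_mul_eval_nonneg (hdeg ℓ) fun x hx => h01 x hx ℓ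
  have hweighted : ∑ x ∈ hamX n, g x • x = b • 1 + (c - b) • y := by
    ext e
    rw [sum_smul_apply_eq_sum_filter (fun x hx => apply_eq_zero_or_one_of_mem_hamX hx), hcount e]
    rcases apply_eq_zero_or_one_of_mem_hamX hy e with h | h <;> simp [h]
  have hexpand : ∑ x ∈ hamX n, F x * g x = b * (((n : ℝ) - 1) / 2) + (c - b) * F y := by
    simp_rw [mul_comm (F _), ← smul_eq_mul, ← map_smul, ← map_sum, hweighted, map_add,
      map_smul, linearMap_apply_one_of_average_hamX_eq_one hn hF.1]
  rw [neg_div', div_le_iff₀ (by linarith)]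
  linarith

/-- **Lemma `bound`.** Fix `y ∈ X` and `f ∈ P_k`.  Suppose
`p_1, …, p_m` are polynomials of degree at most `k`, each taking only the values
`0` or `1` on `X`, and there are constants `0 < b < c` such that for every
unordered pair `e = {i,j}` of distinct vertices,
`Σ_{x∈X, x contains e} Σ_ℓ p_ℓ(x)` equals `c` if `e` is an edge of `y` and `b`
otherwise.  Then `f(y) ≥ -b(n-1)/(2(c-b))`. -/
theorem lower_bound_from_indicator_polynomials
    (n k m : ℕ) (hn : 3 ≤ n) (hk : 1 ≤ k)
    (F : (EdgeIdx n → ℝ) →ₗ[ℝ] ℝ) (hF : memP n k F)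
    (y : EdgeIdx n → ℝ) (hy : y ∈ hamX n)
    (ps : Fin m → MvPolynomial (EdgeIdx n) ℝ)
    (hdeg : ∀ ℓ, (ps ℓ).totalDegree ≤ k)
    (h01 : ∀ x ∈ hamX n, ∀ ℓ,
      MvPolynomial.eval x (ps ℓ) = 0 ∨ MvPolynomial.eval x (ps ℓ) = 1)
    (b c : ℝ) (hb : 0 < b) (hbc : b < c)
    (hcount : ∀ e : EdgeIdx n,
      (∑ x ∈ (hamX n).filter (fun x => x e = 1), ∑ ℓ, MvPolynomial.eval x (ps ℓ))
        = if y e = 1 then c else b) :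
    -(b * ((n : ℝ) - 1) / (2 * (c - b))) ≤ F y :=
  lower_bound_from_indicator_polynomials_general n k m hn F hF y hy ps hdeg h01 b c hbc hcount
end
end

section
/- Let X ⊂ {0,1}^n ⊂ ℝ^n be a nonempty finite set of 0-1 vectors, and let f : X → ℝ be the restriction to X of an affine function on ℝ^n with (1/|X|) Σ_{x∈X} f(x) = 1. If (1/|X|) Σ_{x∈X} f(x) h(x)² ≥ 0 for every polynomial h on ℝ^n of degree at most n, then f(x) ≥ 0 for every x ∈ X. (In other words, for a set of 0-1 vectors in ℝ^n, the n-th relaxation P_n equals Q.) -/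
/-!
The indicator function of a vertex `a` of `{0,1}^n` is a polynomial of degree `n`, a product of
`n` factors `Xᵢ` or `1 - Xᵢ`. Evaluating `q_F` on it isolates the single term `F(a) / |X|`, so
positive semidefiniteness in degree `n` forces `F(a) ≥ 0`.
-/

open Finset

namespace MvPolynomial

variable {σ R : Type*} [Fintype σ] [CommRing R] [DecidableEq R]

noncomputable def cubeIndicator (a : σ → R) : MvPolynomial σ R :=
  ∏ i, if a i = 1 then X i else 1 - X i

variable [Nontrivial R]

theorem totalDegree_cubeIndicator_le (a : σ → R) :
    (cubeIndicator a).totalDegree ≤ Fintype.card σ := by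
  have hfactor : ∀ i, (if a i = 1 then X i else 1 - X i : MvPolynomial σ R).totalDegree ≤ 1 := by
    intro i
    split_ifs
    · exact (totalDegree_X i).le
    · exact (totalDegree_sub _ _).trans
        (max_le (by rw [totalDegree_one]; exact zero_le_one) (totalDegree_X i).le)
  calc (cubeIndicator a).totalDegree
      ≤ ∑ i, (if a i = 1 then X i else 1 - X i : MvPolynomial σ R).totalDegree :=
        totalDegree_finsetProd _ _
    _ ≤ ∑ _i : σ, 1 := sum_le_sum fun i _ => hfactor i
    _ = Fintype.card σ := by simp

theorem eval_cubeIndicator {a x : σ → R} (ha : ∀ i, a i = 0 ∨ a i = 1)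
    (hx : ∀ i, x i = 0 ∨ x i = 1) :
    eval x (cubeIndicator a) = if x = a then 1 else 0 := by
  have hfactor : ∀ i, eval x (if a i = 1 then X i else 1 - X i) = if x i = a i then 1 else 0 := by
    intro i
    rcases ha i with ha' | ha' <;> rcases hx i with hx' | hx' <;> simp [ha', hx']
  simp only [cubeIndicator, map_prod, hfactor, prod_boole, mem_univ, true_implies]
  exact if_congr _root_.funext_iff.symm rfl rfl

theorem sum_mul_eval_cubeIndicator_sq {S : Finset (σ → R)} (hS : ∀ x ∈ S, ∀ i, x i = 0 ∨ x i = 1)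
    {a : σ → R} (ha : a ∈ S) (g : (σ → R) → R) :
    ∑ x ∈ S, g x * eval x (cubeIndicator a) ^ 2 = g a := by
  rw [sum_congr rfl fun x hx => by rw [eval_cubeIndicator (hS a ha) (hS x hx)]]
  simp [ha]

end MvPolynomial

open MvPolynomial in
theorem zero_one_polytope_Pn_eq_Q_general
    (n : ℕ) (X : Finset (Fin n → ℝ))
    (h01 : ∀ x ∈ X, ∀ i, x i = 0 ∨ x i = 1)
    (F : (Fin n → ℝ) →ᵃ[ℝ] ℝ)
    (hpsd : ∀ h : MvPolynomial (Fin n) ℝ, h.totalDegree ≤ n →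
      0 ≤ (X.card : ℝ)⁻¹ * ∑ x ∈ X, F x * (MvPolynomial.eval x h) ^ 2) :
    ∀ x ∈ X, 0 ≤ F x := by
  intro a ha
  have hcard : 0 < (X.card : ℝ)⁻¹ := inv_pos.mpr (Nat.cast_pos.mpr (card_pos.mpr ⟨a, ha⟩))
  have hdeg : (cubeIndicator a).totalDegree ≤ n := by
    simpa using totalDegree_cubeIndicator_le a
  have hq := hpsd (cubeIndicator a) hdeg
  rwa [sum_mul_eval_cubeIndicator_sq h01 ha, mul_nonneg_iff_of_pos_left hcard] at hq

/-- **the case of a 0-1 polytope: `P_n = Q`.**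
Let `X ⊂ {0,1}^n ⊂ ℝ^n` be a nonempty finite set of 0-1 vectors and let `f` be the
restriction to `X` of an affine function `F` on `ℝ^n` with average value `1` on `X`.
If `(1/|X|) Σ_{x∈X} F(x) h(x)² ≥ 0` for every polynomial `h` of degree at most `n`,
then `F(x) ≥ 0` for every `x ∈ X`. -/
theorem zero_one_polytope_Pn_eq_Q
    (n : ℕ) (X : Finset (Fin n → ℝ)) (hX : X.Nonempty)
    (h01 : ∀ x ∈ X, ∀ i, x i = 0 ∨ x i = 1)
    (F : (Fin n → ℝ) →ᵃ[ℝ] ℝ)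
    (havg : (X.card : ℝ)⁻¹ * ∑ x ∈ X, F x = 1)
    (hpsd : ∀ h : MvPolynomial (Fin n) ℝ, h.totalDegree ≤ n →
      0 ≤ (X.card : ℝ)⁻¹ * ∑ x ∈ X, F x * (MvPolynomial.eval x h) ^ 2) :
    ∀ x ∈ X, 0 ≤ F x :=
  zero_one_polytope_Pn_eq_Q_general n X h01 F hpsd
end

section
/- Let U = {ℓ_1, ℓ_2, ..., ℓ_m} ⊂ {1, ..., n} with 2 ≤ m < n, where ℓ_1, ..., ℓ_m are distinct. Then every incidence vector x ∈ X of a Hamiltonian cycle containing all the edges {ℓ_1,ℓ_2}, {ℓ_2,ℓ_3}, ..., {ℓ_{m-1},ℓ_m} satisfies Σ_{u∈U, v∉U} x_{uv} = 2. Consequently, for the polynomial p_U(x) = x_{ℓ_1ℓ_2} x_{ℓ_2ℓ_3} ⋯ x_{ℓ_{m-1}ℓ_m} of degree m-1, one has (1/|X|) Σ_{x∈X} h_U(x) p_U(x)² = 0, so that h_U lies on the boundary of P_k for every k ≥ m-1. -/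
open Finset
noncomputable section
open scoped Classical

/-!
Write the cycle as `σ 0, σ 1, …, σ (n - 1)` and let `A ⊆ Fin n` be the positions `i` with
`σ i ∈ U`. Counting the consecutive pairs `(i, i + 1)` by how many ends they have in `A` gives
`#cut + 2 * #internal = 2 * #A`. The `m - 1` path edges are distinct internal pairs, and not every
position in `A` is followed by one in `A`, since `A` would then be closed under `i ↦ i + 1` and
hence be everything. So there are exactly `m - 1` internal pairs and `2` cut edges. In the average
every summand vanishes: either some factor `x_{ℓ_t ℓ_{t+1}}` is `0`, or all are `1` and then
`h_U(x) = 0`.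
-/

namespace Fin

variable {n : ℕ} [NeZero n]

lemma card_filter_add_one_mem (A : Finset (Fin n)) : #{i | i + 1 ∈ A} = #A := by
  rw [← card_map (Equiv.addRight (1 : Fin n)).toEmbedding]
  congr 1
  ext i
  simp

lemma card_cut_add_two_mul_card_internal (A : Finset (Fin n)) :
    #{i | ¬(i ∈ A ↔ i + 1 ∈ A)} + 2 * #{i | i ∈ A ∧ i + 1 ∈ A} = 2 * #A := by
  have hA : ∑ i, (if i ∈ A then 1 else 0) = #A := by
    rw [← card_filter, filter_mem_eq_inter, univ_inter]
  have hshift : ∑ i, (if i + 1 ∈ A then 1 else 0) = #A := by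
    rw [← card_filter, card_filter_add_one_mem]
  calc #{i | ¬(i ∈ A ↔ i + 1 ∈ A)} + 2 * #{i | i ∈ A ∧ i + 1 ∈ A}
      = ∑ i, ((if i ∈ A then 1 else 0) + if i + 1 ∈ A then 1 else 0) := by
        rw [card_filter, card_filter, mul_sum, ← sum_add_distrib]
        exact sum_congr rfl fun i _ => by split_ifs <;> tauto
    _ = 2 * #A := by rw [sum_add_distrib, hA, hshift, two_mul]

open scoped Fin.NatCast in
lemma eq_univ_of_add_one_mem {A : Finset (Fin n)} (hA : A.Nonempty)
    (hclosed : ∀ i ∈ A, i + 1 ∈ A) : A = univ := by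
  obtain ⟨a, ha⟩ := hA
  have hreach : ∀ k : ℕ, a + (k : Fin n) ∈ A := by
    intro k
    induction k with
    | zero => simpa using ha
    | succ k ih => simpa [Nat.cast_succ, ← add_assoc] using hclosed _ ih
  refine eq_univ_of_forall fun j => ?_
  simpa using hreach (j - a).val

lemma card_internal_lt_card {A : Finset (Fin n)} (hA : A.Nonempty) (hA_ne_univ : A ≠ univ) :
    #{i | i ∈ A ∧ i + 1 ∈ A} < #A := by
  refine card_lt_card (ssubset_iff_of_subset (fun i hi => (mem_filter.mp hi).2.1) |>.mpr ?_)
  by_contra! h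
  exact hA_ne_univ (eq_univ_of_add_one_mem hA fun i hi => by simpa [hi] using h i hi)

lemma add_one_add_one_ne_self (hn : 3 ≤ n) (i : Fin n) : i + 1 + 1 ≠ i := by
  intro h
  have h2 := congrArg Fin.val (add_eq_left.mp ((add_assoc i 1 1).symm.trans h))
  rw [Fin.val_add, Fin.val_one', Fin.val_zero, Nat.one_mod_eq_one.mpr (by omega),
    Nat.mod_eq_of_lt (by omega : 1 + 1 < n)] at h2
  omega

end Fin

lemma mul_prod_pow_eq_zero_of_forall_eq_zero_or_eq_one {ι R : Type*} [Fintype ι]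
    [CommMonoidWithZero R] {f : ι → R} {c : R} {k : ℕ} (hk : k ≠ 0)
    (hf : ∀ i, f i = 0 ∨ f i = 1) (hc : (∀ i, f i = 1) → c = 0) :
    c * (∏ i, f i) ^ k = 0 := by
  by_cases h : ∀ i, f i = 1
  · rw [hc h, zero_mul]
  · obtain ⟨i, hi⟩ := not_forall.mp h
    rw [prod_eq_zero (mem_univ i) ((hf i).resolve_right hi), zero_pow hk, mul_zero]

lemma xval_eq_zero_or_eq_one_of_mem_hamX {n : ℕ} {x : EdgeIdx n → ℝ} (hx : x ∈ hamX n)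
    (u v : Fin n) : xval x u v = 0 ∨ xval x u v = 1 := by
  obtain ⟨σ, -, rfl⟩ := mem_image.mp hx
  unfold xval cycleVec
  split_ifs <;> simp

section HamiltonianCycle

variable {n : ℕ} [NeZero n] (σ : Equiv.Perm (Fin n))

lemma xval_cycleVec {u v : Fin n} (huv : u ≠ v) :
    xval (cycleVec n σ) u v = if ∃ i, s(u, v) = s(σ i, σ (i + 1)) then 1 else 0 := by
  simp only [xval, cycleVec, dif_neg huv, finRotate_apply]

lemma xval_cycleVec_eq_one_iff_s8 {u v : Fin n} (huv : u ≠ v) :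
    xval (cycleVec n σ) u v = 1 ↔ ∃ i, s(u, v) = s(σ i, σ (i + 1)) := by
  rw [xval_cycleVec σ huv]
  split_ifs with h
  · exact iff_of_true rfl h
  · exact iff_of_false zero_ne_one h

lemma cycleEdge_injective_s8 (hn : 3 ≤ n) : Function.Injective fun i => s(σ i, σ (i + 1)) := by
  intro i j h
  rcases Sym2.eq_iff.mp h with ⟨h1, -⟩ | ⟨h1, h2⟩
  · exact σ.injective h1
  · rw [σ.injective h1] at h2
    exact absurd (σ.injective h2) (Fin.add_one_add_one_ne_self hn j)

lemma card_filter_not_iff_eq_card_crossing_pairs (hn : 3 ≤ n) (U : Finset (Fin n)) :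
    #{i | ¬(σ i ∈ U ↔ σ (i + 1) ∈ U)} =
      #{p ∈ U ×ˢ Uᶜ | ∃ i, s(p.1, p.2) = s(σ i, σ (i + 1))} := by
  set f : Fin n → Fin n × Fin n := fun i =>
    if σ i ∈ U then (σ i, σ (i + 1)) else (σ (i + 1), σ i) with hf
  have hedge : ∀ i, s((f i).1, (f i).2) = s(σ i, σ (i + 1)) := fun i => by
    simp only [hf]; split_ifs
    · rfl
    · exact Sym2.eq_swap
  refine card_bij (fun i _ => f i) (fun i hi => ?_) (fun i _ j _ hij => ?_) ?_
  · simp only [mem_filter, mem_univ, true_and, mem_product, mem_compl] at hi ⊢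
    refine ⟨?_, i, hedge i⟩
    simp only [hf]; split_ifs <;> tauto
  · exact cycleEdge_injective_s8 σ hn ((hedge i).symm.trans (hij ▸ hedge j))
  · rintro ⟨u, v⟩ hp
    simp only [mem_filter, mem_product, mem_compl] at hp
    obtain ⟨⟨hu, hv⟩, i, hi⟩ := hp
    refine ⟨i, ?_, ?_⟩ <;> rcases Sym2.eq_iff.mp hi with ⟨rfl, rfl⟩ | ⟨rfl, rfl⟩
    all_goals simp_all

lemma sum_cut_xval_cycleVec (hn : 3 ≤ n) (U : Finset (Fin n)) :
    ∑ u ∈ U, ∑ v ∈ Uᶜ, xval (cycleVec n σ) u v = #{i | ¬(σ i ∈ U ↔ σ (i + 1) ∈ U)} := by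
  have hcycle : ∀ p ∈ U ×ˢ Uᶜ, xval (cycleVec n σ) p.1 p.2
      = if ∃ i, s(p.1, p.2) = s(σ i, σ (i + 1)) then 1 else 0 := fun p hp => by
    simp only [mem_product, mem_compl] at hp
    exact xval_cycleVec σ (ne_of_mem_of_not_mem hp.1 hp.2)
  rw [card_filter_not_iff_eq_card_crossing_pairs σ hn, ← sum_product', sum_congr rfl hcycle,
    sum_boole]

variable {m : ℕ} {ℓ : Fin m → Fin n}

lemma sub_one_le_card_internal_of_path (hℓ : Function.Injective ℓ)
    (hpath : ∀ t : Fin (m - 1),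
      ∃ i, s(ℓ ⟨t, by omega⟩, ℓ ⟨t + 1, by omega⟩) = s(σ i, σ (i + 1))) :
    m - 1 ≤ #{i | σ i ∈ univ.image ℓ ∧ σ (i + 1) ∈ univ.image ℓ} := by
  choose j hj using hpath
  have hmaps : ∀ t ∈ (univ : Finset (Fin (m - 1))),
      j t ∈ ({i | σ i ∈ univ.image ℓ ∧ σ (i + 1) ∈ univ.image ℓ} : Finset (Fin n)) := by
    intro t _
    have hmem : ∀ w ∈ s(σ (j t), σ (j t + 1)), w ∈ univ.image ℓ := by
      rw [← hj t]
      intro w hw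
      rcases Sym2.mem_iff.mp hw with rfl | rfl <;> exact mem_image_of_mem ℓ (mem_univ _)
    simp only [mem_filter, mem_univ, true_and]
    exact ⟨hmem _ (Sym2.mem_mk_left _ _), hmem _ (Sym2.mem_mk_right _ _)⟩
  have hinj : Set.InjOn j (univ : Finset (Fin (m - 1))) := by
    intro t _ t' _ htt'
    rcases Sym2.eq_iff.mp ((hj t).trans (htt' ▸ (hj t').symm)) with ⟨h, -⟩ | ⟨h, h'⟩
    · exact Fin.ext (Fin.mk.inj_iff.mp (hℓ h))
    · have := Fin.mk.inj_iff.mp (hℓ h)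
      have := Fin.mk.inj_iff.mp (hℓ h')
      omega
  simpa using card_le_card_of_injOn j hmaps hinj

lemma sum_cut_xval_cycleVec_eq_two_of_path (hm : 2 ≤ m) (hmn : m < n) (hℓ : Function.Injective ℓ)
    (hpath : ∀ t : Fin (m - 1),
      ∃ i, s(ℓ ⟨t, by omega⟩, ℓ ⟨t + 1, by omega⟩) = s(σ i, σ (i + 1))) :
    ∑ u ∈ univ.image ℓ, ∑ v ∈ (univ.image ℓ)ᶜ, xval (cycleVec n σ) u v = 2 := by
  set A := (univ.image ℓ).map σ.symm.toEmbedding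
  have hmemA : ∀ i, i ∈ A ↔ σ i ∈ univ.image ℓ := by simp [A]
  have hcardA : #A = m := by simp [A, card_image_of_injective _ hℓ]
  have hAuniv : A ≠ univ := fun h => by simp [h] at hcardA; omega
  have hcut := Fin.card_cut_add_two_mul_card_internal A
  have hlt := Fin.card_internal_lt_card (card_pos.mp (by omega)) hAuniv
  have hinternal := sub_one_le_card_internal_of_path σ hℓ hpath
  simp only [hmemA] at hcut hlt
  rw [sum_cut_xval_cycleVec σ (by omega)]
  exact_mod_cast (by omega : _ = 2)

end HamiltonianCycle

/-- **subtour elimination facets on the boundary.**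
Let `U = {ℓ_0, …, ℓ_{m-1}}` with the `ℓ_t` distinct, `2 ≤ m < n`.  Then:
(a) every incidence vector `x ∈ X` of a Hamiltonian cycle containing all the edges
`{ℓ_t, ℓ_{t+1}}` (`0 ≤ t ≤ m-2`) satisfies `Σ_{u∈U, v∉U} x_{uv} = 2`; and
(b) for the degree-`(m-1)` polynomial `p_U(x) = Π_t x_{ℓ_t ℓ_{t+1}}` and the subtour
elimination function `h_U(x) = c (Σ_{u∈U, v∉U} x_{uv} - 2)`,
`c = (n-1)/(2(m(n-m)+1-n))`, one has `(1/|X|) Σ_{x∈X} h_U(x) p_U(x)² = 0`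
(so that `h_U` lies on the boundary of `P_k` for every `k ≥ m-1`). -/
theorem subtour_elimination_on_boundary
    (n m : ℕ) (hm2 : 2 ≤ m) (hmn : m < n)
    (ℓ : Fin m → Fin n) (hℓ : Function.Injective ℓ) :
    (∀ x ∈ hamX n,
      (∀ i : Fin (m - 1),
          xval x (ℓ ⟨i.1, lt_of_lt_of_le i.2 (Nat.sub_le m 1)⟩)
                 (ℓ ⟨i.1 + 1, by have := i.2; omega⟩) = 1) →
      (∑ u ∈ Finset.image ℓ Finset.univ,
        ∑ v ∈ (Finset.image ℓ Finset.univ)ᶜ, xval x u v) = 2) ∧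
    ((hamX n).card : ℝ)⁻¹ * ∑ x ∈ hamX n,
        (((n : ℝ) - 1) / (2 * ((m : ℝ) * ((n : ℝ) - (m : ℝ)) + 1 - (n : ℝ))) *
          ((∑ u ∈ Finset.image ℓ Finset.univ,
             ∑ v ∈ (Finset.image ℓ Finset.univ)ᶜ, xval x u v) - 2)) *
        (∏ i : Fin (m - 1),
          xval x (ℓ ⟨i.1, lt_of_lt_of_le i.2 (Nat.sub_le m 1)⟩)
                 (ℓ ⟨i.1 + 1, by have := i.2; omega⟩)) ^ 2 = 0 := by
  have : NeZero n := ⟨by omega⟩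
  refine (fun hcut => ⟨hcut, ?_⟩) fun x hx hpath => ?_
  · obtain ⟨σ, -, rfl⟩ := mem_image.mp hx
    refine sum_cut_xval_cycleVec_eq_two_of_path σ hm2 hmn hℓ fun t => ?_
    exact (xval_cycleVec_eq_one_iff_s8 σ (hℓ.ne (by simp))).mp (hpath t)
  · rw [sum_eq_zero fun x hx => ?_, mul_zero]
    exact mul_prod_pow_eq_zero_of_forall_eq_zero_or_eq_one two_ne_zero
      (fun i => xval_eq_zero_or_eq_one_of_mem_hamX hx _ _)
      fun hpath => by rw [hcut x hx hpath, sub_self, mul_zero]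
end
end

section
/- Let U = {ℓ_1, ..., ℓ_m} ⊂ V = {1, ..., n}, let s ≥ 1 with 2s+1 ≤ m, and let n_1, ..., n_{2s+1} ∈ V \ U be distinct vertices, so that F = {{ℓ_1,n_1}, ..., {ℓ_{2s+1},n_{2s+1}}} is a matching each of whose edges has exactly one endpoint in U. Suppose the incidence vector x ∈ X of a Hamiltonian cycle satisfies p_{U,F}(x) ≠ 0, where p_{U,F}(x) = Π_{i=1}^{2s+1} x_{ℓ_i n_i} · Π_{j=1}^{s} x_{ℓ_{2j-1} ℓ_{2j}} · Π_{t=2s+1}^{m-1} x_{ℓ_t ℓ_{t+1}}. Then Σ_{j∈U, i∈V\U, {i,j}∉F} x_{ij} = 1 and Σ_{{k,ℓ}∈F} x_{kℓ} = 2s+1 = |F|; in particular, x lies on the facet of the symmetric traveling salesman polytope defined by the 2-matching constraint Σ_{j∈U, i∈V\U, {i,j}∉F} x_{ij} - Σ_{{k,ℓ}∈F} x_{kℓ} ≥ 1 - |F|. -/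
open Finset
noncomputable section
open scoped Classical

/-!
A Hamiltonian cycle is a 2-regular graph. The factors of `p_{U,F}(x)` force into it the edges of
a pattern on `U ∪ {n_i}`: the matching `F`, the pairs `ℓ_{2j} ℓ_{2j+1}` and the path
`ℓ_{2s} ℓ_{2s+1} ⋯ ℓ_{m-1}`. Each `ℓ_k` with `k < m - 1` has two pattern neighbours, hence no
other cycle neighbour, and these lie in `U` or are its `F`-partner. The endpoint `ℓ_{m-1}` has a
single pattern neighbour, so exactly one further cycle neighbour `w`; it is not the `F`-partner,
and it is not in `U` since a vertex of `U` adjacent to `ℓ_{m-1}` would be one of its pattern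
neighbours. So `ℓ_{m-1} w` is the only cut edge outside `F`.
-/

namespace SimpleGraph

variable {V : Type*} [DecidableEq V] {G : SimpleGraph V} {a : V} [Fintype (G.neighborSet a)]

theorem eq_or_eq_of_degree_eq_two {p q v : V} (h : G.degree a = 2) (hp : G.Adj a p)
    (hq : G.Adj a q) (hpq : p ≠ q) (hv : G.Adj a v) : v = p ∨ v = q := by
  have hN : {p, q} = G.neighborFinset a :=
    eq_of_subset_of_card_le (by simp [insert_subset_iff, hp, hq])
      (by rw [card_pair hpq, card_neighborFinset_eq_degree, h])
  simpa [← hN] using (G.mem_neighborFinset a v).2 hv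

theorem exists_adj_ne_of_degree_eq_two (h : G.degree a = 2) (p : V) :
    ∃ w, w ≠ p ∧ G.Adj a w := by
  obtain ⟨x, y, hxy, hN⟩ := card_eq_two.1 (h ▸ G.card_neighborFinset_eq_degree a)
  have hx : G.Adj a x := (G.mem_neighborFinset a x).1 (by simp [hN])
  have hy : G.Adj a y := (G.mem_neighborFinset a y).1 (by simp [hN])
  by_cases hxp : x = p
  · exact ⟨y, hxp ▸ hxy.symm, hy⟩
  · exact ⟨x, hxp, hx⟩

end SimpleGraph

open SimpleGraph

variable {n m s : ℕ}

def permCycleGraph (σ : Equiv.Perm (Fin n)) : SimpleGraph (Fin n) :=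
  (cycleGraph n).comap σ.symm

theorem permCycleGraph_degree (hn : 3 ≤ n) (σ : Equiv.Perm (Fin n)) (a : Fin n) :
    (permCycleGraph σ).degree a = 2 := by
  obtain ⟨k, rfl⟩ : ∃ k, n = k + 3 := ⟨n - 3, by omega⟩
  rw [← cycleGraph_degree_three_le (v := σ.symm a)]
  convert ((Iso.comap σ.symm (cycleGraph (k + 3))).degree_eq a).symm using 2 <;> rfl

def IsIncidenceVector (x : EdgeIdx n → ℝ) (G : SimpleGraph (Fin n)) : Prop :=
  ∀ a b, a ≠ b → xval x a b = if G.Adj a b then 1 else 0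

theorem isIncidenceVector_cycleVec (σ : Equiv.Perm (Fin n)) :
    IsIncidenceVector (cycleVec n σ) (permCycleGraph σ) := by
  intro a b hab
  rw [xval, dif_neg hab, cycleVec]
  congr 1
  apply propext
  match n, σ, a, b, hab with
  | 1, _, a, b, hab => exact absurd (Subsingleton.elim a b) hab
  | k + 2, σ, a, b, _ =>
    obtain ⟨a, rfl⟩ := σ.surjective a
    obtain ⟨b, rfl⟩ := σ.surjective b
    simp only [permCycleGraph, comap_adj, Equiv.symm_apply_apply, cycleGraph_adj,
      finRotate_apply, Sym2.eq_iff, σ.injective.eq_iff, sub_eq_iff_eq_add]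
    constructor
    · rintro ⟨i, ⟨rfl, rfl⟩ | ⟨rfl, rfl⟩⟩ <;> simp [add_comm]
    · rintro (h | h)
      · exact ⟨b, Or.inr ⟨h.trans (add_comm _ _), rfl⟩⟩
      · exact ⟨a, Or.inl ⟨rfl, h.trans (add_comm _ _)⟩⟩

theorem IsIncidenceVector.adj_of_xval_ne_zero {x : EdgeIdx n → ℝ} {G : SimpleGraph (Fin n)}
    (hx : IsIncidenceVector x G) {a b : Fin n} (hab : xval x a b ≠ 0) : G.Adj a b := by
  by_cases he : a = b
  · simp [xval, he] at hab
  · rw [hx a b he] at hab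
    by_contra hG
    simp [hG] at hab

-- `inl k` stands for `ℓ_k` and `inr i` for `n_i`; the edges are those whose variables occur in
-- `p_{U,F}`: `ℓ_i n_i`, `ℓ_{2j} ℓ_{2j+1}` for `j < s`, and `ℓ_t ℓ_{t+1}` for `t ≥ 2s`.
def patternRel (m s : ℕ) : Fin m ⊕ Fin (2 * s + 1) → Fin m ⊕ Fin (2 * s + 1) → Prop
  | .inl i, .inr j => i.val = j.val
  | .inl i, .inl j => j.val = i.val + 1 ∧ (Even i.val ∨ 2 * s ≤ i.val)
  | .inr _, _ => False

def patternGraph (m s : ℕ) : SimpleGraph (Fin m ⊕ Fin (2 * s + 1)) :=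
  fromRel (patternRel m s)

namespace patternGraph

@[simp]
theorem adj_inl_inr {k : Fin m} {i : Fin (2 * s + 1)} :
    (patternGraph m s).Adj (.inl k) (.inr i) ↔ k.val = i.val := by
  simp [patternGraph, patternRel]

@[simp]
theorem adj_inl_inl {k j : Fin m} :
    (patternGraph m s).Adj (.inl k) (.inl j) ↔
      j.val = k.val + 1 ∧ (Even k.val ∨ 2 * s ≤ k.val) ∨
        k.val = j.val + 1 ∧ (Even j.val ∨ 2 * s ≤ j.val) := by
  simp only [patternGraph, fromRel_adj, patternRel, ne_eq, Sum.inl.injEq]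
  refine ⟨fun h => h.2, fun h => ⟨fun hkj => ?_, h⟩⟩
  subst hkj
  omega

theorem exists_adj_adj_of_lt (k : Fin m) (hk : k.val + 1 < m) :
    ∃ b c, b ≠ c ∧ (patternGraph m s).Adj (.inl k) b ∧ (patternGraph m s).Adj (.inl k) c := by
  rcases lt_or_ge k.val (2 * s + 1) with hks | hks
  · obtain ⟨j, hj⟩ : ∃ j : Fin m, (patternGraph m s).Adj (.inl k) (.inl j) := by
      rcases Nat.mod_two_eq_zero_or_one k.val with he | ho
      · exact ⟨⟨k.val + 1, hk⟩, by simp [Nat.even_iff, he]⟩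
      · exact ⟨⟨k.val - 1, by omega⟩, by simp [Nat.even_iff]; omega⟩
    exact ⟨.inr ⟨k.val, hks⟩, .inl j, Sum.inr_ne_inl, by simp, hj⟩
  · exact ⟨.inl ⟨k.val - 1, by omega⟩, .inl ⟨k.val + 1, hk⟩, by simp [Fin.ext_iff],
      by simp; omega, by simp; omega⟩

theorem existsUnique_adj_of_last (hsm : 2 * s + 1 ≤ m) (k : Fin m) (hk : k.val + 1 = m) :
    ∃! a, (patternGraph m s).Adj (.inl k) a := by
  have h_unique : ∀ a b, (patternGraph m s).Adj (.inl k) a →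
      (patternGraph m s).Adj (.inl k) b → a = b := by
    rintro (a | a) (b | b) ha hb <;>
      simp only [adj_inl_inl, adj_inl_inr, Nat.even_iff, Sum.inl.injEq, Sum.inr.injEq,
        reduceCtorEq, Fin.ext_iff] at ha hb ⊢ <;> omega
  obtain ⟨a, ha⟩ : ∃ a, (patternGraph m s).Adj (.inl k) a := by
    by_cases hks : k.val = 2 * s
    · exact ⟨.inr ⟨k.val, by omega⟩, by simp⟩
    · exact ⟨.inl ⟨k.val - 1, by omega⟩, by simp; omega⟩
  exact ⟨a, ha, fun b hb => h_unique _ _ hb ha⟩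

end patternGraph

variable {ℓ : Fin m → Fin n} {ns : Fin (2 * s + 1) → Fin n} {G : SimpleGraph (Fin n)}
  {x : EdgeIdx n → ℝ}

theorem IsIncidenceVector.patternGraph_adj (hx : IsIncidenceVector x G) (hsm : 2 * s + 1 ≤ m)
    (hF : ∀ i : Fin (2 * s + 1), xval x (ℓ (Fin.castLE hsm i)) (ns i) ≠ 0)
    (hpair : ∀ (j : Fin s) (h₁ : 2 * j.val < m) (h₂ : 2 * j.val + 1 < m),
      xval x (ℓ ⟨2 * j.val, h₁⟩) (ℓ ⟨2 * j.val + 1, h₂⟩) ≠ 0)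
    (hpath : ∀ (t : ℕ) (h₁ : t < m) (h₂ : t + 1 < m), 2 * s ≤ t →
      xval x (ℓ ⟨t, h₁⟩) (ℓ ⟨t + 1, h₂⟩) ≠ 0)
    (a b : Fin m ⊕ Fin (2 * s + 1)) (hab : (patternGraph m s).Adj a b) :
    G.Adj (Sum.elim ℓ ns a) (Sum.elim ℓ ns b) := by
  suffices h : ∀ a b, patternRel m s a b → G.Adj (Sum.elim ℓ ns a) (Sum.elim ℓ ns b) from
    hab.2.elim (h a b) fun hba => (h b a hba).symm
  rintro (k | i) (j | i) hr <;> simp only [Sum.elim_inl, Sum.elim_inr]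
  · obtain ⟨hj, hk⟩ := hr
    rcases lt_or_ge k.val (2 * s) with hks | hks
    · obtain ⟨t, ht⟩ := hk.resolve_right (by omega)
      convert hx.adj_of_xval_ne_zero (hpair ⟨t, by omega⟩ (by simp only; omega)
        (by simp only; omega)) using 2 <;> (ext; simp only; omega)
    · convert hx.adj_of_xval_ne_zero (hpath k.val k.2 (by omega) hks) using 2
      exact Fin.ext hj
  · convert hx.adj_of_xval_ne_zero (hF i) using 2
    exact Fin.ext hr
  · exact hr.elim
  · exact hr.elim

theorem matching_of_patternGraph_adj (hsm : 2 * s + 1 ≤ m) {k : Fin m}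
    {b : Fin m ⊕ Fin (2 * s + 1)} (hb : (patternGraph m s).Adj (.inl k) b)
    (hbU : Sum.elim ℓ ns b ∉ image ℓ univ) :
    ∃ i : Fin (2 * s + 1), ℓ k = ℓ (Fin.castLE hsm i) ∧ Sum.elim ℓ ns b = ns i := by
  rcases b with j | i
  · exact absurd (mem_image_of_mem ℓ (mem_univ j)) hbU
  · exact ⟨i, congrArg ℓ (Fin.ext (patternGraph.adj_inl_inr.1 hb)), rfl⟩

structure HostsPattern (G : SimpleGraph (Fin n)) (ℓ : Fin m → Fin n)
    (ns : Fin (2 * s + 1) → Fin n) : Prop where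
  degree_eq_two : ∀ v, G.degree v = 2
  injective : Function.Injective (Sum.elim ℓ ns)
  adj : ∀ a b, (patternGraph m s).Adj a b → G.Adj (Sum.elim ℓ ns a) (Sum.elim ℓ ns b)

namespace HostsPattern

theorem left_injective (h : HostsPattern G ℓ ns) : Function.Injective ℓ :=
  h.injective.comp Sum.inl_injective

theorem patternGraph_adj_of_matching (h : HostsPattern G ℓ ns) (hsm : 2 * s + 1 ≤ m)
    {k : Fin m} {i : Fin (2 * s + 1)} (hki : ℓ k = ℓ (Fin.castLE hsm i)) :
    (patternGraph m s).Adj (.inl k) (.inr i) :=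
  patternGraph.adj_inl_inr.2 (congrArg Fin.val (h.left_injective hki))

theorem exists_patternGraph_adj (h : HostsPattern G ℓ ns) {k : Fin m} (hk : k.val + 1 < m)
    {v : Fin n} (hv : G.Adj (ℓ k) v) :
    ∃ b, (patternGraph m s).Adj (.inl k) b ∧ Sum.elim ℓ ns b = v := by
  obtain ⟨b, c, hbc, hb, hc⟩ := patternGraph.exists_adj_adj_of_lt k hk
  rcases eq_or_eq_of_degree_eq_two (h.degree_eq_two _) (h.adj _ _ hb) (h.adj _ _ hc)
    (h.injective.ne hbc) hv with rfl | rfl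
  exacts [⟨b, hb, rfl⟩, ⟨c, hc, rfl⟩]

theorem matching_of_adj (h : HostsPattern G ℓ ns) (hsm : 2 * s + 1 ≤ m) {k : Fin m}
    (hk : k.val + 1 < m) {v : Fin n} (hv : G.Adj (ℓ k) v) (hvU : v ∉ image ℓ univ) :
    ∃ i : Fin (2 * s + 1), ℓ k = ℓ (Fin.castLE hsm i) ∧ v = ns i := by
  obtain ⟨b, hb, rfl⟩ := h.exists_patternGraph_adj hk hv
  exact matching_of_patternGraph_adj hsm hb hvU

theorem exists_unique_cut_neighbor (h : HostsPattern G ℓ ns) (hsm : 2 * s + 1 ≤ m) {k : Fin m}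
    (hk : k.val + 1 = m) :
    ∃ w, G.Adj (ℓ k) w ∧ w ∉ image ℓ univ ∧
      (¬∃ i : Fin (2 * s + 1), ℓ k = ℓ (Fin.castLE hsm i) ∧ w = ns i) ∧
      ∀ v ∉ image ℓ univ, G.Adj (ℓ k) v →
        (¬∃ i : Fin (2 * s + 1), ℓ k = ℓ (Fin.castLE hsm i) ∧ v = ns i) → v = w := by
  obtain ⟨a, ha, ha_unique⟩ := patternGraph.existsUnique_adj_of_last hsm k hk
  obtain ⟨w, hwa, hw⟩ := exists_adj_ne_of_degree_eq_two (h.degree_eq_two (ℓ k)) (Sum.elim ℓ ns a)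
  have hw_pattern : ∀ b, (patternGraph m s).Adj (.inl k) b → Sum.elim ℓ ns b ≠ w :=
    fun b hb hbw => hwa (hbw ▸ by rw [ha_unique b hb])
  refine ⟨w, hw, fun hwU => ?_, ?_, fun v hvU hv hvF => ?_⟩
  · obtain ⟨j, -, rfl⟩ := mem_image.1 hwU
    have hjk : j.val ≠ k.val := fun hjk => G.ne_of_adj hw (congrArg ℓ (Fin.ext hjk).symm)
    obtain ⟨b, hb, hbk⟩ := h.exists_patternGraph_adj (by omega) hw.symm
    obtain rfl : b = .inl k := h.injective hbk
    exact hw_pattern (.inl j) hb.symm rfl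
  · rintro ⟨i, hki, rfl⟩
    exact hw_pattern (.inr i) (h.patternGraph_adj_of_matching hsm hki) rfl
  · rcases eq_or_eq_of_degree_eq_two (h.degree_eq_two _) (h.adj _ _ ha) hw hwa.symm hv
      with rfl | rfl
    · exact absurd (matching_of_patternGraph_adj hsm ha hvU) hvF
    · rfl

theorem cut_sum_eq_one (h : HostsPattern G ℓ ns) (hsm : 2 * s + 1 ≤ m)
    (hx : IsIncidenceVector x G) :
    (∑ u ∈ image ℓ univ, ∑ v ∈ (image ℓ univ)ᶜ,
      if ∃ i : Fin (2 * s + 1), u = ℓ (Fin.castLE hsm i) ∧ v = ns i then 0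
      else xval x u v) = 1 := by
  have hxU : ∀ k v, v ∈ (image ℓ univ)ᶜ → xval x (ℓ k) v = if G.Adj (ℓ k) v then 1 else 0 :=
    fun k v hv => hx _ _ fun hkv => mem_compl.1 hv (hkv ▸ mem_image_of_mem ℓ (mem_univ k))
  rw [sum_image fun _ _ _ _ hkj => h.left_injective hkj,
    sum_eq_single_of_mem (⟨m - 1, by omega⟩ : Fin m) (mem_univ _) ?_]
  · obtain ⟨w, hw, hwU, hwF, hw_unique⟩ :=
      h.exists_unique_cut_neighbor hsm (k := ⟨m - 1, by omega⟩) (by simp only; omega)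
    rw [sum_eq_single_of_mem w (mem_compl.2 hwU) ?_, if_neg hwF, hxU _ _ (mem_compl.2 hwU),
      if_pos hw]
    intro v hv hvw
    rw [ite_eq_left_iff]
    intro hvF
    rw [hxU _ _ hv, if_neg fun hadj => hvw (hw_unique v (mem_compl.1 hv) hadj hvF)]
  · intro k _ hk
    have hk' : k.val + 1 < m := by have := Fin.val_ne_of_ne hk; simp only at this; omega
    refine sum_eq_zero fun v hv => ?_
    rw [ite_eq_left_iff]
    intro hvF
    rw [hxU _ _ hv, if_neg fun hadj => hvF (h.matching_of_adj hsm hk' hadj (mem_compl.1 hv))]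

theorem matching_sum_eq (h : HostsPattern G ℓ ns) (hsm : 2 * s + 1 ≤ m)
    (hx : IsIncidenceVector x G) :
    ∑ i : Fin (2 * s + 1), xval x (ℓ (Fin.castLE hsm i)) (ns i) = 2 * s + 1 := by
  have hF : ∀ i : Fin (2 * s + 1), G.Adj (ℓ (Fin.castLE hsm i)) (ns i) := fun i =>
    h.adj (.inl _) (.inr i) (patternGraph.adj_inl_inr.2 rfl)
  simp [hx _ _ (hF _).ne, hF]

end HostsPattern

/-- **2-matching constraints.**
Let `U = {ℓ_0, …, ℓ_{m-1}} ⊂ V`, let `s ≥ 1` with `2s+1 ≤ m`, and let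
`n_0, …, n_{2s} ∈ V \ U`, all of the vertices `ℓ_0, …, ℓ_{m-1}, n_0, …, n_{2s}`
being distinct, so that `F = {{ℓ_i, n_i} : 0 ≤ i ≤ 2s}` is a matching each of whose
edges has exactly one endpoint in `U`.  If the incidence vector `x ∈ X` of a
Hamiltonian cycle satisfies `p_{U,F}(x) ≠ 0`, where
`p_{U,F}(x) = Π_{i=0}^{2s} x_{ℓ_i n_i} · Π_{j=0}^{s-1} x_{ℓ_{2j} ℓ_{2j+1}} ·
Π_{t=2s}^{m-2} x_{ℓ_t ℓ_{t+1}}`, then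
`Σ_{u∈U, v∉U, {u,v}∉F} x_{uv} = 1` and `Σ_{{k,l}∈F} x_{kl} = 2s+1 = |F|`;
in particular `x` lies on the facet where the 2-matching constraint
`Σ_{u∈U, v∉U, {u,v}∉F} x_{uv} - Σ_{{k,l}∈F} x_{kl} ≥ 1 - |F|` is tight. -/
theorem two_matching_constraint_tight
    (n m s : ℕ) (hs : 1 ≤ s) (hsm : 2 * s + 1 ≤ m)
    (ℓ : Fin m → Fin n) (ns : Fin (2 * s + 1) → Fin n)
    (hinj : Function.Injective
      (Sum.elim ℓ ns : Fin m ⊕ Fin (2 * s + 1) → Fin n))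
    (x : EdgeIdx n → ℝ) (hx : x ∈ hamX n)
    (hp : (∏ i : Fin (2 * s + 1),
            xval x (ℓ ⟨i.1, by have := i.2; omega⟩) (ns i)) *
          (∏ j : Fin s,
            xval x (ℓ ⟨2 * j.1, by have := j.2; omega⟩)
                   (ℓ ⟨2 * j.1 + 1, by have := j.2; omega⟩)) *
          (∏ t ∈ (Finset.Ico (2 * s) (m - 1)).attach,
            xval x (ℓ ⟨t.1, by have := Finset.mem_Ico.mp t.2; omega⟩)
                   (ℓ ⟨t.1 + 1, by have := Finset.mem_Ico.mp t.2; omega⟩)) ≠ 0) :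
    (∑ u ∈ Finset.image ℓ Finset.univ,
       ∑ v ∈ (Finset.image ℓ Finset.univ)ᶜ,
         if ∃ i : Fin (2 * s + 1),
             u = ℓ ⟨i.1, by have := i.2; omega⟩ ∧ v = ns i then 0
         else xval x u v) = 1 ∧
    (∑ i : Fin (2 * s + 1),
       xval x (ℓ ⟨i.1, by have := i.2; omega⟩) (ns i)) = 2 * s + 1 ∧
    (∑ u ∈ Finset.image ℓ Finset.univ,
       ∑ v ∈ (Finset.image ℓ Finset.univ)ᶜ,
         if ∃ i : Fin (2 * s + 1),
             u = ℓ ⟨i.1, by have := i.2; omega⟩ ∧ v = ns i then 0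
         else xval x u v)
      - (∑ i : Fin (2 * s + 1),
          xval x (ℓ ⟨i.1, by have := i.2; omega⟩) (ns i))
      = 1 - (2 * (s : ℝ) + 1) := by
  obtain ⟨σ, -, rfl⟩ := mem_image.1 hx
  have hn : 3 ≤ n := by
    have := Fintype.card_le_of_injective _ hinj
    simp only [Fintype.card_sum, Fintype.card_fin] at this
    omega
  have hσ := isIncidenceVector_cycleVec σ
  obtain ⟨⟨hF, hpair⟩, hpath⟩ := mul_ne_zero_iff.1 hp |>.imp_left mul_ne_zero_iff.1
  rw [prod_ne_zero_iff] at hF hpair hpath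
  have h : HostsPattern (permCycleGraph σ) ℓ ns :=
    ⟨permCycleGraph_degree hn σ, hinj, hσ.patternGraph_adj hsm (fun i => hF i (mem_univ _))
      (fun j _ _ => hpair j (mem_univ _))
      (fun t _ _ ht => hpath ⟨t, mem_Ico.2 ⟨ht, by omega⟩⟩ (mem_attach _ _))⟩
  have hcut := h.cut_sum_eq_one hsm hσ
  have hmatch := h.matching_sum_eq hsm hσ
  exact ⟨hcut, hmatch, congrArg₂ HSub.hSub hcut hmatch⟩
end
end

section
/- Let n ≥ 4 and let α, β, γ, δ ∈ {1, ..., n} be distinct. Let u be the degree-1 polynomial u(x) = x_{αβ} - x_{βγ} + x_{γδ} - x_{δα} on ℝ^{n(n-1)/2}. Then for every polynomial w of degree at most 1 on ℝ^{n(n-1)/2}, (1/|X|) Σ_{x∈X} u(x) w(x) = (2/(n-1)) ⟨u, w⟩, where ⟨·,·⟩ is the inner product making the monomial basis {1} ∪ {x_{ij} : 1 ≤ i < j ≤ n} orthonormal. That is, the coefficient vector of u is an eigenvector with eigenvalue 2/(n-1) of the matrix A_𝟙 of the quadratic form q_𝟙(h) = (1/|X|) Σ_{x∈X} h(x)² in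 the monomial basis. -/
open Finset
noncomputable section
open scoped Classical

/-- Coefficient vector (in the monomial basis `{x_{pq}}`) of the degree-1 polynomial
`x_{ab} - x_{bc} + x_{cd} - x_{da}` for distinct vertices `a, b, c, d`. -/
def quadCoef {n : ℕ} (a b c d : Fin n) : EdgeIdx n → ℝ := fun e =>
  (if (e : Sym2 (Fin n)) = s(a, b) then 1 else 0)
    - (if (e : Sym2 (Fin n)) = s(b, c) then 1 else 0)
    + (if (e : Sym2 (Fin n)) = s(c, d) then 1 else 0)
    - (if (e : Sym2 (Fin n)) = s(d, a) then 1 else 0)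

/-! The symmetric group on the vertices permutes `X`, so the first moment `∑ₓ x_e` is a constant
`s` and the second moment `∑ₓ x_e x_f` depends only on how `e` and `f` meet. Summing the degree
identity `∑_y x_{vy} = 2` over `X`, unweighted and weighted by `x_e`, gives `(n - 1) s = 2 |X|` and
`∑ₓ x_e x_f = s [e = f] + s (2 - |e ∩ f|) / (n - 2)`. If the signed degree `∑_{e ∋ v} u_e` vanishes
at every vertex, as it does for the alternating 4-cycle, then so do `∑_e u_e` and
`∑_e u_e |e ∩ f|`, hence `∑ₓ u(x) = 0` and `∑ₓ u(x) x_f = s u_f`. -/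

section

variable {n : ℕ}

def edgeOfNe {p q : Fin n} (h : p ≠ q) : EdgeIdx n := ⟨s(p, q), Sym2.mk_isDiag_iff.not.mpr h⟩

@[simp] lemma coe_edgeOfNe {p q : Fin n} (h : p ≠ q) : (edgeOfNe h : Sym2 (Fin n)) = s(p, q) :=
  rfl

lemma edgeOfNe_comm {p q : Fin n} (h : p ≠ q) : edgeOfNe h = edgeOfNe h.symm :=
  Subtype.ext Sym2.eq_swap

lemma exists_eq_edgeOfNe (e : EdgeIdx n) : ∃ (p q : Fin n) (hpq : p ≠ q), e = edgeOfNe hpq := by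
  obtain ⟨z, hz⟩ := e
  induction z using Sym2.ind with
  | _ p q => exact ⟨p, q, Sym2.mk_isDiag_iff.not.mp hz, rfl⟩

lemma exists_eq_edgeOfNe_of_mem {e : EdgeIdx n} {r : Fin n} (hr : r ∈ e.1) :
    ∃ (q : Fin n) (hrq : r ≠ q), e = edgeOfNe hrq := by
  obtain ⟨q, hq⟩ := Sym2.mem_iff_exists.1 hr
  have hrq : r ≠ q := by simpa [hq] using e.2
  exact ⟨q, hrq, Subtype.ext hq⟩

lemma xval_of_ne (x : EdgeIdx n → ℝ) {p q : Fin n} (h : p ≠ q) : xval x p q = x (edgeOfNe h) :=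
  dif_neg h

def permEdge (π : Equiv.Perm (Fin n)) (e : EdgeIdx n) : EdgeIdx n :=
  ⟨e.1.map π, (Sym2.isDiag_map π.injective).not.mpr e.2⟩

lemma permEdge_surjective (π : Equiv.Perm (Fin n)) : Function.Surjective (permEdge π) :=
  fun e => ⟨permEdge π⁻¹ e, Subtype.ext <| by simp [permEdge, Sym2.map_map]⟩

lemma permEdge_swap_of_notMem {u v : Fin n} {e : EdgeIdx n} (hu : u ∉ e.1) (hv : v ∉ e.1) :
    permEdge (Equiv.swap u v) e = e := by
  obtain ⟨p, q, hpq, rfl⟩ := exists_eq_edgeOfNe e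
  simp only [coe_edgeOfNe, Sym2.mem_iff, not_or] at hu hv
  refine Subtype.ext ?_
  simp [permEdge, Equiv.swap_apply_of_ne_of_ne, hu.1, hu.2, hv.1, hv.2, Ne.symm]

lemma permEdge_swap_edgeOfNe {p q r : Fin n} (hpq : p ≠ q) (hpr : p ≠ r) :
    permEdge (Equiv.swap q r) (edgeOfNe hpq) = edgeOfNe hpr :=
  Subtype.ext <| by simp [permEdge, Equiv.swap_apply_of_ne_of_ne hpq hpr]

lemma cycleVec_permEdge (σ π : Equiv.Perm (Fin n)) (e : EdgeIdx n) :
    cycleVec n σ (permEdge π e) = cycleVec n (π⁻¹ * σ) e := by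
  simp only [cycleVec, permEdge]
  congr 1
  refine propext (exists_congr fun i => ?_)
  conv_rhs => rw [← (Sym2.map.injective π.injective).eq_iff]
  simp [Sym2.map_mk]

lemma comp_permEdge_mem_hamX {x : EdgeIdx n → ℝ} (hx : x ∈ hamX n) (π : Equiv.Perm (Fin n)) :
    x ∘ permEdge π ∈ hamX n := by
  obtain ⟨σ, -, rfl⟩ := mem_image.1 hx
  exact mem_image.2 ⟨π⁻¹ * σ, mem_univ _, funext fun e => (cycleVec_permEdge σ π e).symm⟩

lemma sum_hamX_comp_permEdge (π : Equiv.Perm (Fin n)) (F : (EdgeIdx n → ℝ) → ℝ) :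
    ∑ x ∈ hamX n, F (x ∘ permEdge π) = ∑ x ∈ hamX n, F x := by
  have hinj := (permEdge_surjective π).injective_comp_right (γ := ℝ)
  have himage : (hamX n).image (· ∘ permEdge π) = hamX n :=
    eq_of_subset_of_card_le (image_subset_iff.2 fun x hx => comp_permEdge_mem_hamX hx π)
      (card_image_of_injective _ hinj).ge
  conv_rhs => rw [← himage]
  exact (sum_image fun x _ y _ h => hinj h).symm

def firstMoment (n : ℕ) (e : EdgeIdx n) : ℝ := ∑ x ∈ hamX n, x e

def secondMoment (n : ℕ) (e f : EdgeIdx n) : ℝ := ∑ x ∈ hamX n, x e * x f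

lemma firstMoment_permEdge (π : Equiv.Perm (Fin n)) (e : EdgeIdx n) :
    firstMoment n (permEdge π e) = firstMoment n e :=
  sum_hamX_comp_permEdge π (· e)

lemma secondMoment_permEdge (π : Equiv.Perm (Fin n)) (e f : EdgeIdx n) :
    secondMoment n (permEdge π e) (permEdge π f) = secondMoment n e f :=
  sum_hamX_comp_permEdge π (fun x => x e * x f)

lemma secondMoment_edgeOfNe_eq {e : EdgeIdx n} {p q r : Fin n} (hpq : p ≠ q) (hpr : p ≠ r)
    (hq : q ∉ e.1) (hr : r ∉ e.1) :
    secondMoment n e (edgeOfNe hpq) = secondMoment n e (edgeOfNe hpr) := by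
  rw [← secondMoment_permEdge (Equiv.swap q r), permEdge_swap_edgeOfNe hpq hpr,
    permEdge_swap_of_notMem hq hr]

lemma secondMoment_self (e : EdgeIdx n) : secondMoment n e e = firstMoment n e := by
  refine sum_congr rfl fun x hx => ?_
  obtain ⟨σ, -, rfl⟩ := mem_image.1 hx
  unfold cycleVec
  split_ifs <;> norm_num

lemma xval_cycleVec_s10 {m : ℕ} (σ : Equiv.Perm (Fin (m + 3))) (k y : Fin (m + 3)) :
    xval (cycleVec (m + 3) σ) (σ k) y
      = (if y = σ (k + 1) then 1 else 0) + (if y = σ (k - 1) then 1 else 0) := by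
  have h₁ : k + 1 ≠ k := by simp
  have h₂ : k - 1 ≠ k := by simp
  have h₃ : k + 1 ≠ k - 1 := by
    rw [ne_eq, eq_sub_iff_add_eq, add_assoc, add_eq_left]
    simp [Fin.ext_iff, Fin.val_add, Nat.mod_eq_of_lt (show 2 < m + 3 by omega)]
  by_cases hy : σ k = y
  · subst hy
    simp [xval, σ.injective.eq_iff, h₁.symm, h₂.symm]
  have hadj : (∃ i, s(σ k, y) = s(σ i, σ (finRotate (m + 3) i)))
      ↔ y = σ (k + 1) ∨ y = σ (k - 1) := by
    simp only [finRotate_apply, Sym2.eq_iff, σ.injective.eq_iff]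
    constructor
    · rintro ⟨i, ⟨rfl, rfl⟩ | ⟨rfl, rfl⟩⟩
      · exact .inl rfl
      · simp
    · rintro (rfl | rfl)
      · exact ⟨k, .inl ⟨rfl, rfl⟩⟩
      · exact ⟨k - 1, .inr ⟨by simp, rfl⟩⟩
  rw [xval, dif_neg hy]
  simp only [cycleVec]
  rw [if_congr hadj rfl rfl]
  have : σ (k + 1) ≠ σ (k - 1) := σ.injective.ne h₃
  split_ifs <;> simp_all

lemma sum_xval_of_mem_hamX (hn : 3 ≤ n) {x : EdgeIdx n → ℝ} (hx : x ∈ hamX n) (v : Fin n) :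
    ∑ y ∈ univ.erase v, xval x v y = 2 := by
  obtain ⟨m, rfl⟩ : ∃ m, n = m + 3 := ⟨n - 3, by omega⟩
  obtain ⟨σ, -, rfl⟩ := mem_image.1 hx
  obtain ⟨k, rfl⟩ := σ.surjective v
  rw [sum_erase _ (dif_pos rfl)]
  simp only [xval_cycleVec_s10, sum_add_distrib, sum_ite_eq', mem_univ, if_true]
  norm_num

lemma sum_sum_mul_xval (hn : 3 ≤ n) (e : EdgeIdx n) (v : Fin n) :
    ∑ y ∈ univ.erase v, ∑ x ∈ hamX n, x e * xval x v y = 2 * firstMoment n e := by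
  rw [sum_comm, firstMoment, mul_sum]
  refine sum_congr rfl fun x hx => ?_
  rw [← mul_sum, sum_xval_of_mem_hamX hn hx, mul_comm]

lemma firstMoment_mul (hn : 3 ≤ n) {p q : Fin n} (hpq : p ≠ q) :
    firstMoment n (edgeOfNe hpq) * (n - 1) = 2 * #(hamX n) := by
  have hdeg : ∑ y ∈ univ.erase p, ∑ x ∈ hamX n, xval x p y = 2 * #(hamX n) := by
    rw [sum_comm, sum_congr rfl fun x hx => sum_xval_of_mem_hamX hn hx p]
    simp [mul_comm]
  have hy : ∀ y ∈ univ.erase p, ∑ x ∈ hamX n, xval x p y = firstMoment n (edgeOfNe hpq) := by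
    intro y hy
    have hpy : p ≠ y := (ne_of_mem_erase hy).symm
    simp_rw [xval_of_ne _ hpy]
    rw [← permEdge_swap_edgeOfNe hpy hpq, firstMoment_permEdge]
    rfl
  rw [sum_congr rfl hy, sum_const, nsmul_eq_mul, cast_card_erase_of_mem (mem_univ p)] at hdeg
  simpa [mul_comm] using hdeg

lemma firstMoment_eq (hn : 3 ≤ n) (e : EdgeIdx n) :
    firstMoment n e = 2 * #(hamX n) / (n - 1) := by
  obtain ⟨p, q, hpq, rfl⟩ := exists_eq_edgeOfNe e
  have hn1 : (n : ℝ) - 1 ≠ 0 := by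
    have : (3 : ℝ) ≤ n := by exact_mod_cast hn
    linarith
  rw [eq_div_iff hn1]
  exact firstMoment_mul hn hpq

lemma secondMoment_adjacent (hn : 3 ≤ n) {p q r : Fin n} (hpq : p ≠ q) (hpr : p ≠ r)
    (hqr : q ≠ r) :
    secondMoment n (edgeOfNe hpq) (edgeOfNe hpr) * (n - 2) = firstMoment n (edgeOfNe hpq) := by
  have hdeg := sum_sum_mul_xval hn (edgeOfNe hpq) p
  have hq : q ∈ univ.erase p := mem_erase.2 ⟨hpq.symm, mem_univ q⟩
  rw [← add_sum_erase _ _ hq] at hdeg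
  have hqq : ∑ x ∈ hamX n, x (edgeOfNe hpq) * xval x p q = firstMoment n (edgeOfNe hpq) := by
    simp_rw [xval_of_ne _ hpq]
    exact secondMoment_self _
  have hy : ∀ y ∈ (univ.erase p).erase q, ∑ x ∈ hamX n, x (edgeOfNe hpq) * xval x p y
      = secondMoment n (edgeOfNe hpq) (edgeOfNe hpr) := by
    intro y hy
    obtain ⟨hyq, hyp⟩ : y ≠ q ∧ y ≠ p := by simpa using hy
    simp_rw [xval_of_ne _ hyp.symm]
    exact secondMoment_edgeOfNe_eq _ _ (by simp [hyp, hyq]) (by simp [hpr.symm, hqr.symm])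
  rw [hqq, sum_congr rfl hy, sum_const, nsmul_eq_mul, cast_card_erase_of_mem hq,
    cast_card_erase_of_mem (mem_univ p), card_univ, Fintype.card_fin] at hdeg
  linear_combination hdeg

lemma secondMoment_disjoint (hn : 4 ≤ n) {p q r s : Fin n} (hpq : p ≠ q) (hrs : r ≠ s)
    (hpr : p ≠ r) (hps : p ≠ s) (hqr : q ≠ r) (hqs : q ≠ s) :
    secondMoment n (edgeOfNe hpq) (edgeOfNe hrs) * (n - 2)
      = 2 * firstMoment n (edgeOfNe hpq) := by
  have hdeg := sum_sum_mul_xval (by omega) (edgeOfNe hpq) r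
  have hp : p ∈ univ.erase r := mem_erase.2 ⟨hpr, mem_univ p⟩
  have hq : q ∈ (univ.erase r).erase p := by simp [hpq.symm, hqr]
  rw [← add_sum_erase _ _ hp, ← add_sum_erase _ _ hq] at hdeg
  have hgp : ∑ x ∈ hamX n, x (edgeOfNe hpq) * xval x r p
      = secondMoment n (edgeOfNe hpq) (edgeOfNe hpr) := by
    simp_rw [xval_of_ne _ hpr.symm, edgeOfNe_comm hpr.symm]
    rfl
  have hgq : ∑ x ∈ hamX n, x (edgeOfNe hpq) * xval x r q
      = secondMoment n (edgeOfNe hpq) (edgeOfNe hqr) := by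
    simp_rw [xval_of_ne _ hqr.symm, edgeOfNe_comm hqr.symm]
    rfl
  have hy : ∀ y ∈ ((univ.erase r).erase p).erase q,
      ∑ x ∈ hamX n, x (edgeOfNe hpq) * xval x r y
        = secondMoment n (edgeOfNe hpq) (edgeOfNe hrs) := by
    intro y hy
    obtain ⟨hyq, hyp, hyr⟩ : y ≠ q ∧ y ≠ p ∧ y ≠ r := by simpa using hy
    simp_rw [xval_of_ne _ hyr.symm]
    exact secondMoment_edgeOfNe_eq _ _ (by simp [hyp, hyq]) (by simp [hps.symm, hqs.symm])
  rw [hgp, hgq, sum_congr rfl hy, sum_const, nsmul_eq_mul, cast_card_erase_of_mem hq,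
    cast_card_erase_of_mem hp, cast_card_erase_of_mem (mem_univ r), card_univ,
    Fintype.card_fin] at hdeg
  have hadj_p := secondMoment_adjacent (by omega) hpq hpr hqr
  have hadj_q := secondMoment_adjacent (by omega) hpq.symm hqr hpr
  rw [← edgeOfNe_comm hpq] at hadj_q
  have hn3 : (n : ℝ) - 3 ≠ 0 := by
    have : (4 : ℝ) ≤ n := by exact_mod_cast hn
    linarith
  refine mul_left_cancel₀ hn3 ?_
  linear_combination ((n : ℝ) - 2) * hdeg - hadj_p - hadj_q

lemma secondMoment_eq (hn : 4 ≤ n) (e : EdgeIdx n) {r s : Fin n} (hrs : r ≠ s) :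
    secondMoment n e (edgeOfNe hrs) = 2 * #(hamX n) / (n - 1) *
      ((if e = edgeOfNe hrs then 1 else 0) +
        (2 - (if r ∈ e.1 then 1 else 0) - (if s ∈ e.1 then 1 else 0)) / (n - 2)) := by
  have hn2 : (n : ℝ) - 2 ≠ 0 := by
    have : (4 : ℝ) ≤ n := by exact_mod_cast hn
    linarith
  rw [← firstMoment_eq (by omega) e]
  by_cases hr : r ∈ e.1
  · obtain ⟨q, hrq, rfl⟩ := exists_eq_edgeOfNe_of_mem hr
    by_cases hqs : q = s
    · subst hqs
      norm_num [secondMoment_self]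
    · have hs : s ∉ (edgeOfNe hrq).1 := by simp [hrs.symm, Ne.symm hqs]
      have hne : edgeOfNe hrq ≠ edgeOfNe hrs := by rintro h; simp [h] at hs
      rw [if_neg hne, if_pos hr, if_neg hs]
      field_simp
      linarith [secondMoment_adjacent (by omega) hrq hrs hqs]
  by_cases hs : s ∈ e.1
  · obtain ⟨q, hsq, rfl⟩ := exists_eq_edgeOfNe_of_mem hs
    have hqr : q ≠ r := by rintro rfl; simp at hr
    have hne : edgeOfNe hsq ≠ edgeOfNe hrs := by rintro h; simp [h] at hr
    rw [if_neg hne, if_neg hr, if_pos hs, edgeOfNe_comm hrs]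
    field_simp
    linarith [secondMoment_adjacent (by omega) hsq hrs.symm hqr]
  · obtain ⟨p, q, hpq, rfl⟩ := exists_eq_edgeOfNe e
    have hne : edgeOfNe hpq ≠ edgeOfNe hrs := by rintro h; simp [h] at hr
    rw [if_neg hne, if_neg hr, if_neg hs]
    simp only [coe_edgeOfNe, Sym2.mem_iff, not_or] at hr hs
    field_simp
    linarith [secondMoment_disjoint hn hpq hrs (Ne.symm hr.1) (Ne.symm hs.1) (Ne.symm hr.2)
      (Ne.symm hs.2)]

def vertexSum (u : EdgeIdx n → ℝ) (v : Fin n) : ℝ :=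
  ∑ e : EdgeIdx n, if v ∈ (e : Sym2 (Fin n)) then u e else 0

lemma sum_eq_zero_of_vertexSum_eq_zero {u : EdgeIdx n → ℝ} (hu : ∀ v, vertexSum u v = 0) :
    ∑ e, u e = 0 := by
  have hdeg : ∀ e : EdgeIdx n,
      ∑ v : Fin n, (if v ∈ (e : Sym2 (Fin n)) then u e else 0) = 2 * u e := by
    intro e
    rw [← sum_filter, sum_const, nsmul_eq_mul]
    have : univ.filter (· ∈ (e : Sym2 (Fin n))) = (e : Sym2 (Fin n)).toFinset := by
      ext v
      simp [Sym2.mem_toFinset]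
    rw [this, Sym2.card_toFinset_of_not_isDiag _ e.2]
    norm_num
  have h2 : 2 * ∑ e, u e = 0 := by
    rw [mul_sum, ← sum_congr rfl fun e _ => hdeg e, sum_comm]
    exact sum_eq_zero fun v _ => hu v
  linarith

lemma sum_mul_secondMoment (hn : 4 ≤ n) {u : EdgeIdx n → ℝ} (hu : ∀ v, vertexSum u v = 0)
    (f : EdgeIdx n) :
    ∑ e, u e * secondMoment n e f = 2 * #(hamX n) / (n - 1) * u f := by
  obtain ⟨r, s, hrs, rfl⟩ := exists_eq_edgeOfNe f
  set c : ℝ := 2 * #(hamX n) / (n - 1)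
  have hterm : ∀ e, u e * secondMoment n e (edgeOfNe hrs)
      = c * (if e = edgeOfNe hrs then u e else 0) + c / (n - 2) * (2 * u e
        - (if r ∈ (e : Sym2 (Fin n)) then u e else 0)
        - (if s ∈ (e : Sym2 (Fin n)) then u e else 0)) := by
    intro e
    rw [secondMoment_eq hn e hrs]
    split_ifs <;> ring
  simp only [hterm, sum_add_distrib, ← mul_sum, sum_sub_distrib, sum_ite_eq', mem_univ, if_true]
  rw [← vertexSum, ← vertexSum, hu, hu, sum_eq_zero_of_vertexSum_eq_zero hu]
  ring

lemma sum_hamX_linear_mul_linear (u w : EdgeIdx n → ℝ) (w0 : ℝ) :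
    ∑ x ∈ hamX n, (∑ e, u e * x e) * (w0 + ∑ f, w f * x f)
      = w0 * ∑ e, u e * firstMoment n e + ∑ f, w f * ∑ e, u e * secondMoment n e f := by
  simp only [firstMoment, secondMoment, mul_add, sum_add_distrib, sum_mul, mul_sum]
  congr 1
  · rw [sum_comm]
    exact sum_congr rfl fun _ _ => sum_congr rfl fun _ _ => by ring
  · rw [sum_comm, sum_congr rfl fun _ _ => sum_comm]
    exact sum_congr rfl fun _ _ => sum_congr rfl fun _ _ => sum_congr rfl fun _ _ => by ring

theorem average_mul_eq_of_vertexSum_eq_zero (hn : 4 ≤ n) {u : EdgeIdx n → ℝ}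
    (hu : ∀ v, vertexSum u v = 0) (w0 : ℝ) (w : EdgeIdx n → ℝ) :
    ((hamX n).card : ℝ)⁻¹ * ∑ x ∈ hamX n, (∑ e, u e * x e) * (w0 + ∑ e, w e * x e)
      = 2 / ((n : ℝ) - 1) * ∑ e, u e * w e := by
  have hX : ((hamX n).card : ℝ) ≠ 0 :=
    Nat.cast_ne_zero.2 (card_ne_zero_of_mem (mem_image_of_mem (cycleVec n) (mem_univ 1)))
  rw [sum_hamX_linear_mul_linear]
  simp only [firstMoment_eq (by omega : 3 ≤ n), sum_mul_secondMoment hn hu, ← sum_mul,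
    sum_eq_zero_of_vertexSum_eq_zero hu]
  rw [zero_mul, mul_zero, zero_add, mul_sum, mul_sum]
  refine sum_congr rfl fun e _ => ?_
  field_simp

lemma sum_ite_coe_eq_mul {p q : Fin n} (h : p ≠ q) (g : EdgeIdx n → ℝ) :
    ∑ e : EdgeIdx n, (if (e : Sym2 (Fin n)) = s(p, q) then 1 else 0) * g e = g (edgeOfNe h) := by
  simp_rw [boole_mul, ← coe_edgeOfNe h, Subtype.coe_inj, sum_ite_eq', mem_univ, if_true]

lemma sum_quadCoef_mul {a b c d : Fin n} (hab : a ≠ b) (hbc : b ≠ c) (hcd : c ≠ d)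
    (hda : d ≠ a) (g : EdgeIdx n → ℝ) :
    ∑ e, quadCoef a b c d e * g e
      = g (edgeOfNe hab) - g (edgeOfNe hbc) + g (edgeOfNe hcd) - g (edgeOfNe hda) := by
  simp only [quadCoef, sub_mul, add_mul, sum_sub_distrib, sum_add_distrib,
    sum_ite_coe_eq_mul hab, sum_ite_coe_eq_mul hbc, sum_ite_coe_eq_mul hcd, sum_ite_coe_eq_mul hda]

lemma vertexSum_quadCoef {a b c d : Fin n} (hab : a ≠ b) (hbc : b ≠ c) (hcd : c ≠ d)
    (hda : d ≠ a) (v : Fin n) : vertexSum (quadCoef a b c d) v = 0 := by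
  calc vertexSum (quadCoef a b c d) v
      = ∑ e, quadCoef a b c d e * (if v ∈ (e : Sym2 (Fin n)) then 1 else 0) := by
        simp only [vertexSum, mul_boole]
    _ = 0 := by
      rw [sum_quadCoef_mul hab hbc hcd hda]
      simp only [coe_edgeOfNe, Sym2.mem_iff]
      split_ifs <;> simp_all

end

theorem eigenvector_of_all_ones_form_general
    (n : ℕ) (hn : 4 ≤ n) (a b c d : Fin n)
    (hab : a ≠ b) (had : a ≠ d)
    (hbc : b ≠ c) (hcd : c ≠ d)
    (w0 : ℝ) (w : EdgeIdx n → ℝ) :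
    ((hamX n).card : ℝ)⁻¹ * ∑ x ∈ hamX n,
        (∑ e : EdgeIdx n, quadCoef a b c d e * x e) *
          (w0 + ∑ e : EdgeIdx n, w e * x e)
      = (2 / ((n : ℝ) - 1)) * ∑ e : EdgeIdx n, quadCoef a b c d e * w e :=
  average_mul_eq_of_vertexSum_eq_zero hn (vertexSum_quadCoef hab hbc hcd had.symm) w0 w

/-- **eigenvector of `A_𝟙`.**  For `n ≥ 4` and distinct vertices
`a, b, c, d`, the degree-1 polynomial `u(x) = x_{ab} - x_{bc} + x_{cd} - x_{da}`
satisfies, for every degree-≤1 polynomial `w(x) = w₀ + Σ_e w_e x_e`,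
`(1/|X|) Σ_{x∈X} u(x) w(x) = (2/(n-1)) ⟨u, w⟩`, where `⟨u,w⟩` is the inner
product of coefficient vectors in the monomial basis `{1} ∪ {x_{pq}}`
(the constant coefficient of `u` being `0`).  Thus the coefficient vector of `u`
is an eigenvector of the matrix of `q_𝟙` with eigenvalue `2/(n-1)`. -/
theorem eigenvector_of_all_ones_form
    (n : ℕ) (hn : 4 ≤ n) (a b c d : Fin n)
    (hab : a ≠ b) (hac : a ≠ c) (had : a ≠ d)
    (hbc : b ≠ c) (hbd : b ≠ d) (hcd : c ≠ d)
    (w0 : ℝ) (w : EdgeIdx n → ℝ) :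
    ((hamX n).card : ℝ)⁻¹ * ∑ x ∈ hamX n,
        (∑ e : EdgeIdx n, quadCoef a b c d e * x e) *
          (w0 + ∑ e : EdgeIdx n, w e * x e)
      = (2 / ((n : ℝ) - 1)) * ∑ e : EdgeIdx n, quadCoef a b c d e * w e :=
  eigenvector_of_all_ones_form_general n hn a b c d hab had hbc hcd w0 w
end
end

section
/- Let n ≥ 8, let U ⊂ {1, ..., n} with |U| = m, 4 ≤ m ≤ n/2, and let i, j, f, g ∈ U be distinct. Let u be the degree-1 polynomial u(x) = x_{ij} - x_{jf} + x_{fg} - x_{gi}. Then for every polynomial w of degree at most 1 on ℝ^{n(n-1)/2}, (1/|X|) Σ_{x∈X} h_U(x) u(x) w(x) = (2(m-2)/((n-2)(m-1))) ⟨u, w⟩, where ⟨·,·⟩ is the inner product making the monomial basis {1} ∪ {x_{pq} : 1 ≤ p < q ≤ n} orthonormal; i.e., u is an eigenvector of the matrix A_U of the quadratic form q_{h_U} with eigenvalue 2(m-2)/((n-2)(m-1)). -/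
open Finset
noncomputable section
open scoped Classical

/-- The subtour elimination function `h_U(x) = c (Σ_{u∈U, v∉U} x_{uv} - 2)` with
`c = (n-1)/(2(m(n-m)+1-n))`, where `m = |U|` (so that `h_U` has average value `1`
on `X`). -/
def hU {n : ℕ} (U : Finset (Fin n)) (x : EdgeIdx n → ℝ) : ℝ :=
  (((n : ℝ) - 1) / (2 * ((U.card : ℝ) * ((n : ℝ) - (U.card : ℝ)) + 1 - (n : ℝ)))) *
    ((∑ u ∈ U, ∑ v ∈ Uᶜ, xval x u v) - 2)

/-!
Averages over `X` of products of at most three edge variables follow from two facts: `X` is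
invariant under relabelling the vertices, and every vertex of a Hamiltonian cycle has degree
two. Multiplying `∑ v, x_{cv} = 2` by such a product and grouping the vertices `v` by symmetry
expresses each average through smaller ones.

Swapping `j, g` (or `i, f`) fixes `U` and negates `u`. Hence `avg(h_U u) = 0`, and
`e ↦ avg(h_U u x_e)` is odd under both swaps, so it is a multiple of the coefficient vector of
`u`. The multiple is read off at `e = ij`: for `v ∉ U`, the degree identity at `v` turns the part
of the cut at `v` into averages of `u x_{ij}` and of `x_{ab} u x_{ij}` with `a, b ∉ U`.
-/

lemma Sym2.map_perm_eq_mk_iff {α : Type*} (π : Equiv.Perm α) (z : Sym2 α) (a b : α) :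
    z.map π = s(a, b) ↔ z = s(π⁻¹ a, π⁻¹ b) := by
  rw [← (Sym2.map.injective π⁻¹.injective).eq_iff, Sym2.map_map, Sym2.map_mk]
  simp

lemma swap_apply_mem_iff {α : Type*} [DecidableEq α] {U : Finset α} {a b : α} (ha : a ∈ U)
    (hb : b ∈ U) (v : α) : Equiv.swap a b v ∈ U ↔ v ∈ U := by
  rw [Equiv.swap_apply_def]
  split_ifs with h1 h2 <;> simp_all

lemma Finset.four_le_card {α : Type*} [DecidableEq α] {U : Finset α} {i j f g : α}
    (hiU : i ∈ U) (hjU : j ∈ U) (hfU : f ∈ U) (hgU : g ∈ U) (hij : i ≠ j) (hif : i ≠ f)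
    (hig : i ≠ g) (hjf : j ≠ f) (hjg : j ≠ g) (hfg : f ≠ g) : 4 ≤ #U := by
  have hsub : {i, j, f, g} ⊆ U := by simp [Finset.insert_subset_iff, hiU, hjU, hfU, hgU]
  have hcard : #({i, j, f, g} : Finset α) = 4 := by
    simp [Finset.card_insert_of_notMem, hij, hif, hig, hjf, hjg, hfg]
  exact hcard ▸ Finset.card_le_card hsub

lemma Fin.add_one_add_one_ne_self_s11 {k : ℕ} (hk : 2 ≤ k) (s : Fin (k + 1)) : s + 1 + 1 ≠ s := by
  simp only [ne_eq, Fin.ext_iff, Fin.val_add_one, Fin.val_last]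
  split_ifs <;> omega

lemma Fin.not_three_cycle {k : ℕ} (hk : 3 ≤ k) {s t r : Fin (k + 1)}
    (hst : t = s + 1 ∨ s = t + 1) (htr : r = t + 1 ∨ t = r + 1)
    (hrs : s = r + 1 ∨ r = s + 1) : False := by
  rcases hst with h1 | h1 <;> rcases htr with h2 | h2 <;> rcases hrs with h3 | h3 <;>
  · simp only [Fin.ext_iff, Fin.val_add_one, Fin.val_last] at h1 h2 h3
    split_ifs at h1 h2 h3 <;> omega

section

variable {n : ℕ}

def edgePerm (π : Equiv.Perm (Fin n)) : Equiv.Perm (EdgeIdx n) where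
  toFun e := ⟨e.1.map π, by rw [Sym2.isDiag_map π.injective]; exact e.2⟩
  invFun e := ⟨e.1.map π.symm, by rw [Sym2.isDiag_map π.symm.injective]; exact e.2⟩
  left_inv e := Subtype.ext (by simp [Sym2.map_map])
  right_inv e := Subtype.ext (by simp [Sym2.map_map])

lemma edgePerm_symm (π : Equiv.Perm (Fin n)) : (edgePerm π).symm = edgePerm π⁻¹ := by
  ext; rfl

lemma xval_comp_edgePerm (π : Equiv.Perm (Fin n)) (x : EdgeIdx n → ℝ) (a b : Fin n) :
    xval (x ∘ edgePerm π) a b = xval x (π a) (π b) := by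
  unfold xval
  by_cases h : a = b
  · simp [h]
  · rw [dif_neg h, dif_neg (π.injective.ne h)]
    rfl

lemma xval_comm (x : EdgeIdx n → ℝ) (a b : Fin n) : xval x a b = xval x b a := by
  unfold xval
  by_cases h : a = b
  · subst h; rfl
  · rw [dif_neg h, dif_neg (Ne.symm h)]
    exact congrArg x (Subtype.ext Sym2.eq_swap)

@[simp] lemma xval_self (x : EdgeIdx n → ℝ) (a : Fin n) : xval x a a = 0 := dif_pos rfl

lemma cycleVec_comp_edgePerm (σ π : Equiv.Perm (Fin n)) :
    cycleVec n σ ∘ edgePerm π = cycleVec n (π⁻¹ * σ) := by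
  funext e
  simp only [cycleVec, Function.comp_apply, edgePerm, Equiv.coe_fn_mk, Sym2.map_perm_eq_mk_iff]
  rfl

lemma comp_edgePerm_mem_hamX {x : EdgeIdx n → ℝ} (hx : x ∈ hamX n) (π : Equiv.Perm (Fin n)) :
    x ∘ edgePerm π ∈ hamX n := by
  obtain ⟨σ, -, rfl⟩ := Finset.mem_image.mp hx
  rw [cycleVec_comp_edgePerm]
  exact Finset.mem_image_of_mem _ (Finset.mem_univ _)

lemma sum_hamX_comp_edgePerm (π : Equiv.Perm (Fin n)) (F : (EdgeIdx n → ℝ) → ℝ) :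
    ∑ x ∈ hamX n, F (x ∘ edgePerm π) = ∑ x ∈ hamX n, F x := by
  refine Finset.sum_nbij' (· ∘ edgePerm π) (· ∘ edgePerm π⁻¹)
    (fun x hx => comp_edgePerm_mem_hamX hx π) (fun x hx => comp_edgePerm_mem_hamX hx π⁻¹)
    (fun x _ => ?_) (fun x _ => ?_) (fun _ _ => rfl)
  · simp [Function.comp_assoc, ← edgePerm_symm]
  · simp [Function.comp_assoc, ← edgePerm_symm]

lemma exists_xval_eq_xval_cycleVec_one {x : EdgeIdx n → ℝ} (hx : x ∈ hamX n) :
    ∃ π : Equiv.Perm (Fin n), ∀ a b, xval x a b = xval (cycleVec n 1) (π a) (π b) := by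
  obtain ⟨σ, -, rfl⟩ := Finset.mem_image.mp hx
  refine ⟨σ⁻¹, fun a b => ?_⟩
  rw [← xval_comp_edgePerm, cycleVec_comp_edgePerm, inv_inv, mul_one]

lemma xval_cycleVec_one {k : ℕ} (hk : 1 ≤ k) (s t : Fin (k + 1)) :
    xval (cycleVec (k + 1) 1) s t = if t = s + 1 ∨ s = t + 1 then 1 else 0 := by
  by_cases hst : s = t
  · subst hst
    rw [xval_self, if_neg]
    simp only [or_self, Fin.ext_iff, Fin.val_add_one, Fin.val_last]
    split_ifs <;> omega
  · rw [xval, dif_neg hst, cycleVec]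
    simp only [Equiv.Perm.coe_one, id_eq, finRotate_apply, Sym2.eq_iff]
    congr 1
    refine propext ⟨?_, ?_⟩
    · rintro ⟨i, ⟨rfl, rfl⟩ | ⟨rfl, rfl⟩⟩ <;> simp
    · rintro (h | h)
      · exact ⟨s, Or.inl ⟨rfl, h⟩⟩
      · exact ⟨t, Or.inr ⟨h, rfl⟩⟩

lemma sum_xval_cycleVec_one {k : ℕ} (hk : 2 ≤ k) (s : Fin (k + 1)) :
    ∑ t, xval (cycleVec (k + 1) 1) s t = 2 := by
  have hne : s + 1 ≠ s - 1 := fun h =>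
    Fin.add_one_add_one_ne_self_s11 hk s (by rw [h, sub_add_cancel])
  have hfilter : ({t | t = s + 1 ∨ s = t + 1} : Finset (Fin (k + 1))) = {s + 1, s - 1} := by
    ext t
    simp only [Finset.mem_filter, Finset.mem_univ, true_and, Finset.mem_insert,
      Finset.mem_singleton, eq_sub_iff_add_eq, eq_comm (a := s)]
  simp_rw [xval_cycleVec_one (k := k) (by omega), Finset.sum_boole, hfilter, Finset.card_pair hne]
  norm_num

lemma xval_eq_zero_or_eq_one {x : EdgeIdx n → ℝ} (hx : x ∈ hamX n) (a b : Fin n) :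
    xval x a b = 0 ∨ xval x a b = 1 := by
  obtain ⟨σ, -, rfl⟩ := Finset.mem_image.mp hx
  unfold xval cycleVec
  split_ifs <;> simp

lemma xval_nonneg {x : EdgeIdx n → ℝ} (hx : x ∈ hamX n) (a b : Fin n) : 0 ≤ xval x a b := by
  rcases xval_eq_zero_or_eq_one hx a b with h | h <;> simp [h]

lemma xval_mul_self {x : EdgeIdx n → ℝ} (hx : x ∈ hamX n) (a b : Fin n) :
    xval x a b * xval x a b = xval x a b := by
  rcases xval_eq_zero_or_eq_one hx a b with h | h <;> simp [h]

lemma sum_xval_eq_two (hn : 3 ≤ n) {x : EdgeIdx n → ℝ} (hx : x ∈ hamX n) (a : Fin n) :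
    ∑ b, xval x a b = 2 := by
  obtain ⟨k, rfl⟩ : ∃ k, n = k + 1 := ⟨n - 1, by omega⟩
  obtain ⟨π, hπ⟩ := exists_xval_eq_xval_cycleVec_one hx
  simp_rw [hπ]
  rw [Equiv.sum_comp π (xval (cycleVec (k + 1) 1) (π a)), sum_xval_cycleVec_one (by omega)]

lemma xval_triangle_eq_zero (hn : 4 ≤ n) {x : EdgeIdx n → ℝ} (hx : x ∈ hamX n)
    (a b c : Fin n) : xval x a b * xval x b c * xval x c a = 0 := by
  obtain ⟨k, rfl⟩ : ∃ k, n = k + 1 := ⟨n - 1, by omega⟩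
  obtain ⟨π, hπ⟩ := exists_xval_eq_xval_cycleVec_one hx
  simp only [hπ, xval_cycleVec_one (k := k) (by omega), mul_ite, mul_one, mul_zero]
  split_ifs with h1 h2 h3 <;> first | rfl | exact (Fin.not_three_cycle (by omega) h3 h2 h1).elim

lemma xval_claw_eq_zero (hn : 3 ≤ n) {x : EdgeIdx n → ℝ} (hx : x ∈ hamX n)
    {a b c d : Fin n} (hbc : b ≠ c) (hbd : b ≠ d) (hcd : c ≠ d) :
    xval x a b * xval x a c * xval x a d = 0 := by
  by_contra h
  have h1 : ∀ v, xval x a v ≠ 0 → xval x a v = 1 := fun v =>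
    (xval_eq_zero_or_eq_one hx a v).resolve_left
  have hle : ∑ v ∈ {b, c, d}, xval x a v ≤ ∑ v, xval x a v :=
    Finset.sum_le_sum_of_subset_of_nonneg (Finset.subset_univ _)
      (fun v _ _ => xval_nonneg hx a v)
  rw [sum_xval_eq_two hn hx, Finset.sum_insert (by simp [hbc, hbd]),
    Finset.sum_pair hcd, h1 b (by contrapose! h; simp [h]), h1 c (by contrapose! h; simp [h]),
    h1 d (by contrapose! h; simp [h])] at hle
  norm_num at hle

lemma sum_hamX_mul_xval_eq_of_invariant {P : (EdgeIdx n → ℝ) → ℝ} {S : Finset (Fin n)}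
    {c d v : Fin n} (hP : ∀ π : Equiv.Perm (Fin n), π c = c → (∀ s ∈ S, π s = s) →
      ∀ x, P (x ∘ edgePerm π) = P x)
    (hdS : d ∉ S) (hvS : v ∉ S) (hcd : c ≠ d) (hcv : c ≠ v) :
    ∑ x ∈ hamX n, P x * xval x c v = ∑ x ∈ hamX n, P x * xval x c d := by
  have hfix : ∀ s, s ≠ d → s ≠ v → Equiv.swap d v s = s := fun s =>
    Equiv.swap_apply_of_ne_of_ne
  rw [← sum_hamX_comp_edgePerm (Equiv.swap d v)]
  refine Finset.sum_congr rfl fun x _ => ?_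
  rw [hP _ (hfix c hcd hcv) (fun s hs => hfix s (by rintro rfl; exact hdS hs)
      (by rintro rfl; exact hvS hs)), xval_comp_edgePerm, hfix c hcd hcv, Equiv.swap_apply_right]

lemma sum_hamX_mul_xval_split (hn : 3 ≤ n) {P : (EdgeIdx n → ℝ) → ℝ}
    {S : Finset (Fin n)} {k : ℕ} (hS : #S + 1 = k) {c d : Fin n}
    (hP : ∀ π : Equiv.Perm (Fin n), π c = c → (∀ s ∈ S, π s = s) →
      ∀ x, P (x ∘ edgePerm π) = P x)
    (hcS : c ∉ S) (hdS : d ∉ S) (hcd : c ≠ d) :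
    ((n : ℝ) - k) * ∑ x ∈ hamX n, P x * xval x c d
      + ∑ v ∈ S, ∑ x ∈ hamX n, P x * xval x c v = 2 * ∑ x ∈ hamX n, P x := by
  have houtside : ∑ v ∈ Sᶜ, ∑ x ∈ hamX n, P x * xval x c v
      = ((n : ℝ) - k) * ∑ x ∈ hamX n, P x * xval x c d := by
    have hc : c ∈ Sᶜ := Finset.mem_compl.mpr hcS
    rw [← Finset.sum_erase (a := c) _ (by simp), Finset.sum_congr rfl fun v hv =>
      sum_hamX_mul_xval_eq_of_invariant hP hdS
        (Finset.mem_compl.mp (Finset.mem_of_mem_erase hv)) hcd (Finset.ne_of_mem_erase hv).symm,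
      Finset.sum_const, nsmul_eq_mul,
      Finset.card_erase_of_mem hc, Finset.card_compl, Fintype.card_fin]
    have hlt : #S < n := by simpa using Finset.card_lt_univ_of_notMem hcS
    rw [Nat.cast_sub (by omega), Nat.cast_sub hlt.le, ← hS]
    push_cast
    ring
  rw [← houtside, add_comm, Finset.sum_add_sum_compl, Finset.sum_comm, Finset.mul_sum]
  refine Finset.sum_congr rfl fun x hx => ?_
  rw [← Finset.mul_sum, sum_xval_eq_two hn hx, mul_comm]

section Moments

variable {a b c d e f : Fin n}

lemma sum_xval_edge (hn : 3 ≤ n) (hab : a ≠ b) :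
    ∑ x ∈ hamX n, xval x a b = 2 / ((n : ℝ) - 1) * #(hamX n) := by
  have h := sum_hamX_mul_xval_split hn (P := fun _ => 1) (S := ∅) (k := 1) rfl
    (fun _ _ _ _ => rfl) (Finset.notMem_empty a) (Finset.notMem_empty b) hab
  simp only [one_mul, Finset.sum_empty, Finset.sum_const, nsmul_eq_mul, mul_one, add_zero,
    Nat.cast_one] at h
  have h1 : (n : ℝ) - 1 ≠ 0 := sub_ne_zero.mpr (by norm_cast; omega)
  refine mul_left_cancel₀ h1 ?_
  rw [h]
  field_simp

lemma sum_xval_path_two (hn : 3 ≤ n) (hab : a ≠ b) (hac : a ≠ c) (hbc : b ≠ c) :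
    ∑ x ∈ hamX n, xval x a b * xval x b c
      = 2 / (((n : ℝ) - 1) * ((n : ℝ) - 2)) * #(hamX n) := by
  have h := sum_hamX_mul_xval_split hn (P := fun x => xval x a b) (S := {a}) (k := 2) rfl
    (fun π _ hπ x => by simp_all [xval_comp_edgePerm]) (by simpa using hab.symm)
    (by simpa using hac.symm) hbc
  have hback : ∑ x ∈ hamX n, xval x a b * xval x b a = ∑ x ∈ hamX n, xval x a b :=
    Finset.sum_congr rfl fun x hx => by rw [xval_comm x b a, xval_mul_self hx]
  simp only [Finset.sum_singleton, Nat.cast_ofNat, hback, sum_xval_edge hn hab] at h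
  have h1 : (n : ℝ) - 1 ≠ 0 := sub_ne_zero.mpr (by norm_cast; omega)
  have h2 : (n : ℝ) - 2 ≠ 0 := sub_ne_zero.mpr (by norm_cast; omega)
  refine mul_left_cancel₀ h2 ?_
  rw [eq_sub_of_add_eq h]
  field_simp
  ring

lemma sum_xval_two_disjoint (hn : 4 ≤ n) (hab : a ≠ b) (hac : a ≠ c) (had : a ≠ d)
    (hbc : b ≠ c) (hbd : b ≠ d) (hcd : c ≠ d) :
    ∑ x ∈ hamX n, xval x a b * xval x c d
      = 4 / (((n : ℝ) - 1) * ((n : ℝ) - 2)) * #(hamX n) := by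
  have h := sum_hamX_mul_xval_split (by omega : 3 ≤ n) (P := fun x => xval x a b) (S := {a, b})
    (k := 3) (by simp [hab]) (fun π _ hπ x => by simp_all [xval_comp_edgePerm])
    (by simp [hac.symm, hbc.symm]) (by simp [had.symm, hbd.symm]) hcd
  have hca : ∑ x ∈ hamX n, xval x a b * xval x c a
      = 2 / (((n : ℝ) - 1) * ((n : ℝ) - 2)) * #(hamX n) :=
    (Finset.sum_congr rfl fun x _ => mul_comm _ _).trans
      (sum_xval_path_two (by omega) hac.symm hbc.symm hab)
  have hcb : ∑ x ∈ hamX n, xval x a b * xval x c b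
      = 2 / (((n : ℝ) - 1) * ((n : ℝ) - 2)) * #(hamX n) :=
    (Finset.sum_congr rfl fun x _ => by rw [xval_comm x c b]).trans
      (sum_xval_path_two (by omega) hab hac hbc)
  simp only [Finset.sum_pair hab, hca, hcb, sum_xval_edge (by omega) hab, Nat.cast_ofNat] at h
  have h1 : (n : ℝ) - 1 ≠ 0 := sub_ne_zero.mpr (by norm_cast; omega)
  have h2 : (n : ℝ) - 2 ≠ 0 := sub_ne_zero.mpr (by norm_cast; omega)
  have h3 : (n : ℝ) - 3 ≠ 0 := sub_ne_zero.mpr (by norm_cast; omega)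
  refine mul_left_cancel₀ h3 ?_
  rw [eq_sub_of_add_eq h]
  field_simp
  ring

lemma sum_xval_path_three (hn : 4 ≤ n) (hab : a ≠ b) (hac : a ≠ c) (had : a ≠ d)
    (hbc : b ≠ c) (hbd : b ≠ d) (hcd : c ≠ d) :
    ∑ x ∈ hamX n, xval x a b * xval x b c * xval x c d
      = 2 / (((n : ℝ) - 1) * ((n : ℝ) - 2) * ((n : ℝ) - 3)) * #(hamX n) := by
  have h := sum_hamX_mul_xval_split (by omega : 3 ≤ n)
    (P := fun x => xval x a b * xval x b c) (S := {a, b}) (k := 3) (by simp [hab])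
    (fun π _ hπ x => by simp_all [xval_comp_edgePerm])
    (by simp [hac.symm, hbc.symm]) (by simp [had.symm, hbd.symm]) hcd
  have hca : ∑ x ∈ hamX n, xval x a b * xval x b c * xval x c a = 0 :=
    Finset.sum_eq_zero fun x hx => xval_triangle_eq_zero hn hx a b c
  have hcb : ∑ x ∈ hamX n, xval x a b * xval x b c * xval x c b
      = ∑ x ∈ hamX n, xval x a b * xval x b c :=
    Finset.sum_congr rfl fun x hx => by rw [xval_comm x c b, mul_assoc, xval_mul_self hx]
  simp only [Finset.sum_pair hab, hca, hcb, sum_xval_path_two (by omega : 3 ≤ n) hab hac hbc,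
    Nat.cast_ofNat] at h
  have h1 : (n : ℝ) - 1 ≠ 0 := sub_ne_zero.mpr (by norm_cast; omega)
  have h2 : (n : ℝ) - 2 ≠ 0 := sub_ne_zero.mpr (by norm_cast; omega)
  have h3 : (n : ℝ) - 3 ≠ 0 := sub_ne_zero.mpr (by norm_cast; omega)
  refine mul_left_cancel₀ h3 ?_
  rw [eq_sub_of_add_eq h]
  field_simp
  ring

lemma sum_xval_path_two_disjoint (hn : 5 ≤ n) (hab : a ≠ b) (hac : a ≠ c) (had : a ≠ d)
    (hae : a ≠ e) (hbc : b ≠ c) (hbd : b ≠ d) (hbe : b ≠ e) (hcd : c ≠ d) (hce : c ≠ e)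
    (hde : d ≠ e) :
    ∑ x ∈ hamX n, xval x a b * xval x b c * xval x d e
      = 4 / (((n : ℝ) - 1) * ((n : ℝ) - 2) * ((n : ℝ) - 3)) * #(hamX n) := by
  have h := sum_hamX_mul_xval_split (by omega : 3 ≤ n)
    (P := fun x => xval x a b * xval x b c) (S := {a, b, c}) (k := 4) (by simp [hab, hac, hbc])
    (fun π _ hπ x => by simp_all [xval_comp_edgePerm])
    (by simp [had.symm, hbd.symm, hcd.symm]) (by simp [hae.symm, hbe.symm, hce.symm]) hde
  have hda : ∑ x ∈ hamX n, xval x a b * xval x b c * xval x d a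
      = 2 / (((n : ℝ) - 1) * ((n : ℝ) - 2) * ((n : ℝ) - 3)) * #(hamX n) :=
    (Finset.sum_congr rfl fun x _ => by ring).trans
      (sum_xval_path_three (by omega) had.symm hbd.symm hcd.symm hab hac hbc)
  have hdb : ∑ x ∈ hamX n, xval x a b * xval x b c * xval x d b = 0 :=
    Finset.sum_eq_zero fun x hx => by
      rw [xval_comm x a b, xval_comm x d b]
      exact xval_claw_eq_zero (by omega) hx hac had hcd
  have hdc : ∑ x ∈ hamX n, xval x a b * xval x b c * xval x d c
      = 2 / (((n : ℝ) - 1) * ((n : ℝ) - 2) * ((n : ℝ) - 3)) * #(hamX n) :=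
    (Finset.sum_congr rfl fun x _ => by rw [xval_comm x d c]).trans
      (sum_xval_path_three (by omega) hab hac had hbc hbd hcd)
  simp only [Finset.sum_insert (show a ∉ ({b, c} : Finset (Fin n)) by simp [hab, hac]),
    Finset.sum_pair hbc, hda, hdb, hdc, sum_xval_path_two (by omega : 3 ≤ n) hab hac hbc,
    Nat.cast_ofNat] at h
  have h1 : (n : ℝ) - 1 ≠ 0 := sub_ne_zero.mpr (by norm_cast; omega)
  have h2 : (n : ℝ) - 2 ≠ 0 := sub_ne_zero.mpr (by norm_cast; omega)
  have h3 : (n : ℝ) - 3 ≠ 0 := sub_ne_zero.mpr (by norm_cast; omega)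
  have h4 : (n : ℝ) - 4 ≠ 0 := sub_ne_zero.mpr (by norm_cast; omega)
  refine mul_left_cancel₀ h4 ?_
  rw [eq_sub_of_add_eq h]
  field_simp
  ring

lemma sum_xval_three_disjoint (hn : 6 ≤ n) (hab : a ≠ b) (hac : a ≠ c) (had : a ≠ d)
    (hae : a ≠ e) (haf : a ≠ f) (hbc : b ≠ c) (hbd : b ≠ d) (hbe : b ≠ e) (hbf : b ≠ f)
    (hcd : c ≠ d) (hce : c ≠ e) (hcf : c ≠ f) (hde : d ≠ e) (hdf : d ≠ f)
    (hef : e ≠ f) :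
    ∑ x ∈ hamX n, xval x a b * xval x c d * xval x e f
      = 8 / (((n : ℝ) - 1) * ((n : ℝ) - 2) * ((n : ℝ) - 3)) * #(hamX n) := by
  have h := sum_hamX_mul_xval_split (by omega : 3 ≤ n)
    (P := fun x => xval x a b * xval x c d) (S := {a, b, c, d}) (k := 5)
    (by simp [hab, hac, had, hbc, hbd, hcd])
    (fun π _ hπ x => by simp_all [xval_comp_edgePerm])
    (by simp [hae.symm, hbe.symm, hce.symm, hde.symm])
    (by simp [haf.symm, hbf.symm, hcf.symm, hdf.symm]) hef
  have hea : ∑ x ∈ hamX n, xval x a b * xval x c d * xval x e a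
      = 4 / (((n : ℝ) - 1) * ((n : ℝ) - 2) * ((n : ℝ) - 3)) * #(hamX n) :=
    (Finset.sum_congr rfl fun x _ => by ring).trans
      (sum_xval_path_two_disjoint (by omega) hae.symm hbe.symm hce.symm hde.symm hab hac had
        hbc hbd hcd)
  have heb : ∑ x ∈ hamX n, xval x a b * xval x c d * xval x e b
      = 4 / (((n : ℝ) - 1) * ((n : ℝ) - 2) * ((n : ℝ) - 3)) * #(hamX n) :=
    (Finset.sum_congr rfl fun x _ => by rw [xval_comm x e b]; ring).trans
      (sum_xval_path_two_disjoint (by omega) hab hae hac had hbe hbc hbd hce.symm hde.symm hcd)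
  have hec : ∑ x ∈ hamX n, xval x a b * xval x c d * xval x e c
      = 4 / (((n : ℝ) - 1) * ((n : ℝ) - 2) * ((n : ℝ) - 3)) * #(hamX n) :=
    (Finset.sum_congr rfl fun x _ => by ring).trans
      (sum_xval_path_two_disjoint (by omega) hce.symm hde.symm hae.symm hbe.symm hcd hac.symm
        hbc.symm had.symm hbd.symm hab)
  have hed : ∑ x ∈ hamX n, xval x a b * xval x c d * xval x e d
      = 4 / (((n : ℝ) - 1) * ((n : ℝ) - 2) * ((n : ℝ) - 3)) * #(hamX n) :=
    (Finset.sum_congr rfl fun x _ => by rw [xval_comm x e d]; ring).trans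
      (sum_xval_path_two_disjoint (by omega) hcd hce hac.symm hbc.symm hde had.symm hbd.symm
        hae.symm hbe.symm hab)
  simp only [Finset.sum_insert (show a ∉ ({b, c, d} : Finset (Fin n)) by simp [hab, hac, had]),
    Finset.sum_insert (show b ∉ ({c, d} : Finset (Fin n)) by simp [hbc, hbd]),
    Finset.sum_pair hcd, hea, heb, hec, hed,
    sum_xval_two_disjoint (by omega) hab hac had hbc hbd hcd,
    Nat.cast_ofNat] at h
  have h1 : (n : ℝ) - 1 ≠ 0 := sub_ne_zero.mpr (by norm_cast; omega)
  have h2 : (n : ℝ) - 2 ≠ 0 := sub_ne_zero.mpr (by norm_cast; omega)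
  have h3 : (n : ℝ) - 3 ≠ 0 := sub_ne_zero.mpr (by norm_cast; omega)
  have h5 : (n : ℝ) - 5 ≠ 0 := sub_ne_zero.mpr (by norm_cast; omega)
  refine mul_left_cancel₀ h5 ?_
  rw [eq_sub_of_add_eq h]
  field_simp
  ring

end Moments

variable {i j f g : Fin n}

lemma hU_comp_edgePerm {U : Finset (Fin n)} {π : Equiv.Perm (Fin n)}
    (hπ : ∀ v, π v ∈ U ↔ v ∈ U) (x : EdgeIdx n → ℝ) :
    hU U (x ∘ edgePerm π) = hU U x := by
  have hπc : ∀ v, v ∈ Uᶜ ↔ π v ∈ Uᶜ := fun v => by simp [hπ]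
  simp only [hU, xval_comp_edgePerm]
  congr 2
  exact Finset.sum_equiv π (fun u => (hπ u).symm) fun u _ =>
    Finset.sum_equiv π hπc fun v _ => rfl

lemma sum_hU_mul_comp_edgePerm {U : Finset (Fin n)} {π : Equiv.Perm (Fin n)}
    (hπ : ∀ v, π v ∈ U ↔ v ∈ U) (G : (EdgeIdx n → ℝ) → ℝ) :
    ∑ x ∈ hamX n, hU U x * G (x ∘ edgePerm π) = ∑ x ∈ hamX n, hU U x * G x := by
  rw [← sum_hamX_comp_edgePerm π (fun x => hU U x * G x)]
  simp only [hU_comp_edgePerm hπ]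

lemma sum_indicator_mul (x : EdgeIdx n → ℝ) (a b : Fin n) :
    ∑ e : EdgeIdx n, (if (e : Sym2 (Fin n)) = s(a, b) then 1 else 0) * x e = xval x a b := by
  by_cases hab : a = b
  · subst hab
    refine (Finset.sum_eq_zero fun e _ => ?_).trans (xval_self x a).symm
    rw [if_neg fun h : (e : Sym2 (Fin n)) = s(a, a) => e.2 (h ▸ Sym2.mk_isDiag_iff.mpr rfl),
      zero_mul]
  · rw [xval, dif_neg hab,
      Finset.sum_eq_single_of_mem ⟨s(a, b), Sym2.mk_isDiag_iff.not.mpr hab⟩ (Finset.mem_univ _)]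
    · simp
    · intro e _ he
      rw [if_neg (fun h => he (Subtype.ext h)), zero_mul]

def quadForm (i j f g : Fin n) (x : EdgeIdx n → ℝ) : ℝ :=
  xval x i j - xval x j f + xval x f g - xval x g i

lemma sum_quadCoef_mul_s11 (i j f g : Fin n) (x : EdgeIdx n → ℝ) :
    ∑ e, quadCoef i j f g e * x e = quadForm i j f g x := by
  simp only [quadCoef, quadForm, sub_mul, add_mul, Finset.sum_sub_distrib,
    Finset.sum_add_distrib, sum_indicator_mul]

lemma quadForm_comp_swap_right (hij : i ≠ j) (hig : i ≠ g) (hjf : j ≠ f) (hfg : f ≠ g)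
    (x : EdgeIdx n → ℝ) :
    quadForm i j f g (x ∘ edgePerm (Equiv.swap j g)) = -quadForm i j f g x := by
  simp only [quadForm, xval_comp_edgePerm, Equiv.swap_apply_left, Equiv.swap_apply_right,
    Equiv.swap_apply_of_ne_of_ne hij hig, Equiv.swap_apply_of_ne_of_ne hjf.symm hfg]
  rw [xval_comm x i g, xval_comm x g f, xval_comm x f j, xval_comm x j i]
  ring

lemma quadForm_comp_swap_left (hij : i ≠ j) (hig : i ≠ g) (hjf : j ≠ f) (hfg : f ≠ g)
    (x : EdgeIdx n → ℝ) :
    quadForm i j f g (x ∘ edgePerm (Equiv.swap i f)) = -quadForm i j f g x := by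
  simp only [quadForm, xval_comp_edgePerm, Equiv.swap_apply_left, Equiv.swap_apply_right,
    Equiv.swap_apply_of_ne_of_ne hij.symm hjf, Equiv.swap_apply_of_ne_of_ne hig.symm hfg.symm]
  rw [xval_comm x f j, xval_comm x j i, xval_comm x i g, xval_comm x g f]
  ring

lemma sum_quadForm_mul_xval (hn : 4 ≤ n) (hij : i ≠ j) (hif : i ≠ f) (hig : i ≠ g)
    (hjf : j ≠ f) (hjg : j ≠ g) (hfg : f ≠ g) :
    ∑ x ∈ hamX n, quadForm i j f g x * xval x i j = 2 / ((n : ℝ) - 1) * #(hamX n) := by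
  have hsplit : ∑ x ∈ hamX n, quadForm i j f g x * xval x i j
      = ∑ x ∈ hamX n, xval x i j - ∑ x ∈ hamX n, xval x i j * xval x j f
        + ∑ x ∈ hamX n, xval x i j * xval x f g
        - ∑ x ∈ hamX n, xval x g i * xval x i j := by
    simp only [← Finset.sum_sub_distrib, ← Finset.sum_add_distrib]
    refine Finset.sum_congr rfl fun x hx => ?_
    rw [quadForm]
    linear_combination xval_mul_self hx i j
  rw [hsplit, sum_xval_path_two (by omega) hij hif hjf,
    sum_xval_two_disjoint hn hij hif hig hjf hjg hfg,
    sum_xval_path_two (by omega) hig.symm hjg.symm hij, sum_xval_edge (by omega) hij]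
  ring

lemma sum_quadForm_mul_xval_mul_xval (hn : 6 ≤ n) (hij : i ≠ j) (hif : i ≠ f) (hig : i ≠ g)
    (hjf : j ≠ f) (hjg : j ≠ g) (hfg : f ≠ g) {a b : Fin n} (hab : a ≠ b)
    (ha : a ∉ ({i, j, f, g} : Finset (Fin n))) (hb : b ∉ ({i, j, f, g} : Finset (Fin n))) :
    ∑ x ∈ hamX n, quadForm i j f g x * xval x i j * xval x a b
      = 4 / (((n : ℝ) - 1) * ((n : ℝ) - 2)) * #(hamX n) := by
  simp only [Finset.mem_insert, Finset.mem_singleton, not_or] at ha hb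
  obtain ⟨hai, haj, haf, hag⟩ := ha
  obtain ⟨hbi, hbj, hbf, hbg⟩ := hb
  have hsplit : ∑ x ∈ hamX n, quadForm i j f g x * xval x i j * xval x a b
      = ∑ x ∈ hamX n, xval x a b * xval x i j
        - ∑ x ∈ hamX n, xval x f j * xval x j i * xval x a b
        + ∑ x ∈ hamX n, xval x a b * xval x f g * xval x i j
        - ∑ x ∈ hamX n, xval x g i * xval x i j * xval x a b := by
    simp only [← Finset.sum_sub_distrib, ← Finset.sum_add_distrib]
    refine Finset.sum_congr rfl fun x hx => ?_
    rw [quadForm, xval_comm x f j, xval_comm x j i]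
    linear_combination xval x a b * xval_mul_self hx i j
  rw [hsplit, sum_xval_two_disjoint (by omega) hab hai haj hbi hbj hij,
    sum_xval_path_two_disjoint (by omega) hjf.symm hif.symm (Ne.symm haf) (Ne.symm hbf) hij.symm
      (Ne.symm haj) (Ne.symm hbj) (Ne.symm hai) (Ne.symm hbi) hab,
    sum_xval_three_disjoint hn hab haf hag hai haj hbf hbg hbi hbj hfg hif.symm hjf.symm
      hig.symm hjg.symm hij,
    sum_xval_path_two_disjoint (by omega) hig.symm hjg.symm (Ne.symm hag) (Ne.symm hbg) hij
      (Ne.symm hai) (Ne.symm hbi) (Ne.symm haj) (Ne.symm hbj) hab]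
  ring

lemma sum_cut_mul_quadForm_mul_xval {U : Finset (Fin n)} (hUn : #U + 2 ≤ n)
    (hiU : i ∈ U) (hjU : j ∈ U) (hfU : f ∈ U) (hgU : g ∈ U)
    (hij : i ≠ j) (hif : i ≠ f) (hig : i ≠ g) (hjf : j ≠ f) (hjg : j ≠ g)
    (hfg : f ≠ g) :
    ∑ x ∈ hamX n, (∑ u ∈ U, ∑ v ∈ Uᶜ, xval x u v) * (quadForm i j f g x * xval x i j)
      = 4 * ((n : ℝ) - #U) * ((#U : ℝ) - 1) / (((n : ℝ) - 1) * ((n : ℝ) - 2))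
        * #(hamX n) := by
  set R : (EdgeIdx n → ℝ) → ℝ := fun x => quadForm i j f g x * xval x i j with hR
  have h4 := Finset.four_le_card hiU hjU hfU hgU hij hif hig hjf hjg hfg
  have hUc : #Uᶜ = n - #U := by rw [Finset.card_compl, Fintype.card_fin]
  have hsub : ∀ {a}, a ∉ U → a ∉ ({i, j, f, g} : Finset (Fin n)) := fun ha h =>
    ha (by simp only [Finset.mem_insert, Finset.mem_singleton] at h
           rcases h with rfl | rfl | rfl | rfl <;> assumption)
  have hout : ∀ v ∈ Uᶜ, ∑ u ∈ U, ∑ x ∈ hamX n, R x * xval x v u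
      = 2 * (2 / ((n : ℝ) - 1) * #(hamX n))
        - ((n : ℝ) - (#U + 1 : ℕ)) * (4 / (((n : ℝ) - 1) * ((n : ℝ) - 2)) * #(hamX n)) := by
    intro v hv
    obtain ⟨a, ha, hav⟩ := Finset.exists_mem_ne (by omega : 1 < #Uᶜ) v
    rw [Finset.mem_compl] at hv ha
    have h := sum_hamX_mul_xval_split (by omega : 3 ≤ n) (P := R) (S := U) rfl
      (fun π _ hπ x => by
        simp [hR, quadForm, xval_comp_edgePerm, hπ i hiU, hπ j hjU, hπ f hfU, hπ g hgU])
      hv ha hav.symm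
    rw [sum_quadForm_mul_xval (by omega) hij hif hig hjf hjg hfg,
      sum_quadForm_mul_xval_mul_xval (by omega) hij hif hig hjf hjg hfg hav.symm (hsub hv)
        (hsub ha)] at h
    linear_combination h
  calc ∑ x ∈ hamX n, (∑ u ∈ U, ∑ v ∈ Uᶜ, xval x u v) * R x
      = ∑ v ∈ Uᶜ, ∑ u ∈ U, ∑ x ∈ hamX n, R x * xval x v u := by
        simp only [Finset.sum_mul]
        rw [Finset.sum_comm]
        refine (Finset.sum_congr rfl fun u _ => Finset.sum_comm).trans (Finset.sum_comm.trans ?_)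
        exact Finset.sum_congr rfl fun v _ => Finset.sum_congr rfl fun u _ =>
          Finset.sum_congr rfl fun x _ => by rw [xval_comm, mul_comm]
    _ = 4 * ((n : ℝ) - #U) * ((#U : ℝ) - 1) / (((n : ℝ) - 1) * ((n : ℝ) - 2))
          * #(hamX n) := by
        rw [Finset.sum_congr rfl hout, Finset.sum_const, hUc, nsmul_eq_mul,
          Nat.cast_sub (by omega : #U ≤ n)]
        have h1 : (n : ℝ) - 1 ≠ 0 := sub_ne_zero.mpr (by norm_cast; omega)
        have h2 : (n : ℝ) - 2 ≠ 0 := sub_ne_zero.mpr (by norm_cast; omega)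
        field_simp
        push_cast
        ring

lemma sum_hU_mul_quadForm_mul_xval {U : Finset (Fin n)} (hUn : #U + 2 ≤ n)
    (hiU : i ∈ U) (hjU : j ∈ U) (hfU : f ∈ U) (hgU : g ∈ U)
    (hij : i ≠ j) (hif : i ≠ f) (hig : i ≠ g) (hjf : j ≠ f) (hjg : j ≠ g)
    (hfg : f ≠ g) :
    ∑ x ∈ hamX n, hU U x * quadForm i j f g x * xval x i j
      = 2 * ((#U : ℝ) - 2) / (((n : ℝ) - 2) * ((#U : ℝ) - 1)) * #(hamX n) := by
  have h4 := Finset.four_le_card hiU hjU hfU hgU hij hif hig hjf hjg hfg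
  set κ : ℝ := ((n : ℝ) - 1) / (2 * ((#U : ℝ) * ((n : ℝ) - #U) + 1 - n)) with hκ
  have hterm : ∀ x, hU U x * quadForm i j f g x * xval x i j
      = κ * ((∑ u ∈ U, ∑ v ∈ Uᶜ, xval x u v)
          * (quadForm i j f g x * xval x i j))
        - 2 * κ * (quadForm i j f g x * xval x i j) :=
    fun x => by rw [hU]; ring
  simp only [hterm, Finset.sum_sub_distrib, ← Finset.mul_sum]
  rw [sum_cut_mul_quadForm_mul_xval hUn hiU hjU hfU hgU hij hif hig hjf hjg hfg,
    sum_quadForm_mul_xval (by omega) hij hif hig hjf hjg hfg, hκ]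
  have hn1 : (n : ℝ) - 1 ≠ 0 := sub_ne_zero.mpr (by norm_cast; omega)
  have hn2 : (n : ℝ) - 2 ≠ 0 := sub_ne_zero.mpr (by norm_cast; omega)
  have hU1 : (#U : ℝ) - 1 ≠ 0 := sub_ne_zero.mpr (by norm_cast; omega)
  have hUc1 : (n : ℝ) - #U - 1 ≠ 0 := by
    rw [sub_sub, sub_ne_zero]; norm_cast; omega
  have hden : (#U : ℝ) * ((n : ℝ) - #U) + 1 - n ≠ 0 := by
    rw [show (#U : ℝ) * ((n : ℝ) - #U) + 1 - n = ((#U : ℝ) - 1) * ((n : ℝ) - #U - 1) by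
      ring]
    exact mul_ne_zero hU1 hUc1
  field_simp
  ring

lemma eq_mul_quadCoef_of_odd (hij : i ≠ j) (hif : i ≠ f) (hig : i ≠ g) (hjf : j ≠ f)
    (hjg : j ≠ g) (hfg : f ≠ g) {φ : EdgeIdx n → ℝ} {c : ℝ}
    (hc : ∀ e : EdgeIdx n, (e : Sym2 (Fin n)) = s(i, j) → φ e = c)
    (hφjg : ∀ e, φ (edgePerm (Equiv.swap j g) e) = -φ e)
    (hφif : ∀ e, φ (edgePerm (Equiv.swap i f) e) = -φ e) (e : EdgeIdx n) :
    φ e = c * quadCoef i j f g e := by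
  have hmove : ∀ τ : Equiv.Perm (Fin n), (∀ e, φ (edgePerm τ e) = -φ e) →
      ∀ e e' : EdgeIdx n, (e : Sym2 (Fin n)).map τ = e' → φ e = -φ e' := by
    intro τ hτ e e' h
    rw [← show edgePerm τ e = e' from Subtype.ext h, hτ, neg_neg]
  have hig' : ∀ e : EdgeIdx n, (e : Sym2 (Fin n)) = s(i, g) → φ e = -c := by
    intro e he
    rw [hmove _ hφjg e ⟨s(i, j), Sym2.mk_isDiag_iff.not.mpr hij⟩ (by
      simp [he, Equiv.swap_apply_of_ne_of_ne hij hig]), hc _ rfl]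
  have hfj : ∀ e : EdgeIdx n, (e : Sym2 (Fin n)) = s(f, j) → φ e = -c := by
    intro e he
    rw [hmove _ hφif e ⟨s(i, j), Sym2.mk_isDiag_iff.not.mpr hij⟩ (by
      simp [he, Equiv.swap_apply_of_ne_of_ne hij.symm hjf]), hc _ rfl]
  have hfg' : ∀ e : EdgeIdx n, (e : Sym2 (Fin n)) = s(f, g) → φ e = c := by
    intro e he
    rw [hmove _ hφjg e ⟨s(f, j), Sym2.mk_isDiag_iff.not.mpr hjf.symm⟩ (by
      simp [he, Equiv.swap_apply_of_ne_of_ne hjf.symm hfg]), hfj _ rfl, neg_neg]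
  obtain ⟨E, hE⟩ := e
  induction E using Sym2.ind with
  | _ p q =>
  have hfixed : ∀ τ : Equiv.Perm (Fin n), (∀ e, φ (edgePerm τ e) = -φ e) → τ p = p →
      τ q = q → φ ⟨s(p, q), hE⟩ = 0 := by
    intro τ hτ hp hq
    have := hmove τ hτ ⟨s(p, q), hE⟩ ⟨s(p, q), hE⟩ (by simp [hp, hq])
    linarith
  -- An edge fixed by one of the swaps is killed; the remaining edges form the orbit of `ij`.
  by_cases hA : p ≠ j ∧ p ≠ g ∧ q ≠ j ∧ q ≠ g
  · rw [hfixed _ hφjg (Equiv.swap_apply_of_ne_of_ne hA.1 hA.2.1)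
      (Equiv.swap_apply_of_ne_of_ne hA.2.2.1 hA.2.2.2)]
    simp [quadCoef, hA]
  by_cases hB : p ≠ i ∧ p ≠ f ∧ q ≠ i ∧ q ≠ f
  · rw [hfixed _ hφif (Equiv.swap_apply_of_ne_of_ne hB.1 hB.2.1)
      (Equiv.swap_apply_of_ne_of_ne hB.2.2.1 hB.2.2.2)]
    simp [quadCoef, hB]
  have : (p = i ∨ p = f) ∧ (q = j ∨ q = g) ∨ (p = j ∨ p = g) ∧ (q = i ∨ q = f) := by
    grind
  rcases this with ⟨rfl | rfl, rfl | rfl⟩ | ⟨rfl | rfl, rfl | rfl⟩ <;>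
  first
  | rw [hc _ rfl] | rw [hc _ Sym2.eq_swap] | rw [hig' _ rfl] | rw [hig' _ Sym2.eq_swap]
  | rw [hfj _ rfl] | rw [hfj _ Sym2.eq_swap] | rw [hfg' _ rfl] | rw [hfg' _ Sym2.eq_swap]
  all_goals simp [quadCoef, hij, hif, hig, hjf, hjg, hfg, hij.symm, hif.symm, hig.symm, hjf.symm,
    hjg.symm, hfg.symm]

lemma sum_hU_mul_quadForm {U : Finset (Fin n)} (hjU : j ∈ U) (hgU : g ∈ U) (hij : i ≠ j)
    (hig : i ≠ g) (hjf : j ≠ f) (hfg : f ≠ g) :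
    ∑ x ∈ hamX n, hU U x * quadForm i j f g x = 0 := by
  have h := sum_hU_mul_comp_edgePerm (swap_apply_mem_iff hjU hgU) (quadForm i j f g)
  simp only [quadForm_comp_swap_right hij hig hjf hfg, mul_neg, Finset.sum_neg_distrib] at h
  linarith

lemma sum_hU_mul_quadForm_mul_apply {U : Finset (Fin n)} (hUn : #U + 2 ≤ n)
    (hiU : i ∈ U) (hjU : j ∈ U) (hfU : f ∈ U) (hgU : g ∈ U)
    (hij : i ≠ j) (hif : i ≠ f) (hig : i ≠ g) (hjf : j ≠ f) (hjg : j ≠ g) (hfg : f ≠ g)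
    (e : EdgeIdx n) :
    ∑ x ∈ hamX n, hU U x * quadForm i j f g x * x e
      = 2 * ((#U : ℝ) - 2) / (((n : ℝ) - 2) * ((#U : ℝ) - 1)) * #(hamX n)
        * quadCoef i j f g e := by
  refine eq_mul_quadCoef_of_odd hij hif hig hjf hjg hfg
    (φ := fun e => ∑ x ∈ hamX n, hU U x * quadForm i j f g x * x e)
    (fun e he => ?_) (fun e => ?_) (fun e => ?_) e
  · have hxe : ∀ x : EdgeIdx n → ℝ, x e = xval x i j := fun x => by
      rw [xval, dif_neg hij]
      exact congrArg x (Subtype.ext he)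
    simp only [hxe]
    exact sum_hU_mul_quadForm_mul_xval hUn hiU hjU hfU hgU hij hif hig hjf hjg hfg
  · have h := sum_hU_mul_comp_edgePerm (swap_apply_mem_iff hjU hgU)
      (fun x => quadForm i j f g x * x e)
    simp only [quadForm_comp_swap_right hij hig hjf hfg, Function.comp_apply] at h
    simp only [← h, mul_assoc, neg_mul, mul_neg, Finset.sum_neg_distrib, neg_neg]
  · have h := sum_hU_mul_comp_edgePerm (swap_apply_mem_iff hiU hfU)
      (fun x => quadForm i j f g x * x e)
    simp only [quadForm_comp_swap_left hij hig hjf hfg, Function.comp_apply] at h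
    simp only [← h, mul_assoc, neg_mul, mul_neg, Finset.sum_neg_distrib, neg_neg]

end

theorem eigenvector_of_subtour_form_inside_U_general
    (n m : ℕ) (U : Finset (Fin n)) (hUcard : U.card = m)
    (hm4 : 4 ≤ m) (hmn : 2 * m ≤ n)
    (i j f g : Fin n) (hiU : i ∈ U) (hjU : j ∈ U) (hfU : f ∈ U) (hgU : g ∈ U)
    (hij : i ≠ j) (hif : i ≠ f) (hig : i ≠ g)
    (hjf : j ≠ f) (hjg : j ≠ g) (hfg : f ≠ g)
    (w0 : ℝ) (w : EdgeIdx n → ℝ) :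
    ((hamX n).card : ℝ)⁻¹ * ∑ x ∈ hamX n,
        hU U x * (∑ e : EdgeIdx n, quadCoef i j f g e * x e) *
          (w0 + ∑ e : EdgeIdx n, w e * x e)
      = (2 * ((m : ℝ) - 2) / (((n : ℝ) - 2) * ((m : ℝ) - 1))) *
          ∑ e : EdgeIdx n, quadCoef i j f g e * w e := by
  subst hUcard
  have hN : (#(hamX n) : ℝ) ≠ 0 := by
    exact_mod_cast (Finset.Nonempty.image Finset.univ_nonempty _).card_pos.ne'
  have hsplit : ∀ x, hU U x * quadForm i j f g x * (w0 + ∑ e, w e * x e)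
      = w0 * (hU U x * quadForm i j f g x) + ∑ e, w e * (hU U x * quadForm i j f g x * x e) :=
    fun x => by
      rw [mul_add, Finset.mul_sum]
      exact congrArg₂ _ (by ring) (Finset.sum_congr rfl fun e _ => by ring)
  simp only [sum_quadCoef_mul_s11, hsplit, Finset.sum_add_distrib, ← Finset.mul_sum]
  rw [Finset.sum_comm]
  simp only [← Finset.mul_sum, sum_hU_mul_quadForm hjU hgU hij hig hjf hfg,
    sum_hU_mul_quadForm_mul_apply (by omega) hiU hjU hfU hgU hij hif hig hjf hjg hfg]
  rw [mul_zero, zero_add, ← sum_quadCoef_mul_s11, Finset.mul_sum, Finset.mul_sum]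
  refine Finset.sum_congr rfl fun e _ => ?_
  field_simp

/-- **eigenvector of `A_U`, first kind.**  Let `n ≥ 8`,
`U ⊂ {1, …, n}`, `|U| = m`, `4 ≤ m ≤ n/2`, and let `i, j, f, g ∈ U` be distinct.
The degree-1 polynomial `u(x) = x_{ij} - x_{jf} + x_{fg} - x_{gi}` satisfies,
for every degree-≤1 polynomial `w(x) = w₀ + Σ_e w_e x_e`,
`(1/|X|) Σ_{x∈X} h_U(x) u(x) w(x) = (2(m-2)/((n-2)(m-1))) ⟨u, w⟩`;
i.e. `u` is an eigenvector of the matrix of `q_{h_U}` with eigenvalue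
`2(m-2)/((n-2)(m-1))`. -/
theorem eigenvector_of_subtour_form_inside_U
    (n m : ℕ) (hn : 8 ≤ n) (U : Finset (Fin n)) (hUcard : U.card = m)
    (hm4 : 4 ≤ m) (hmn : 2 * m ≤ n)
    (i j f g : Fin n) (hiU : i ∈ U) (hjU : j ∈ U) (hfU : f ∈ U) (hgU : g ∈ U)
    (hij : i ≠ j) (hif : i ≠ f) (hig : i ≠ g)
    (hjf : j ≠ f) (hjg : j ≠ g) (hfg : f ≠ g)
    (w0 : ℝ) (w : EdgeIdx n → ℝ) :
    ((hamX n).card : ℝ)⁻¹ * ∑ x ∈ hamX n,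
        hU U x * (∑ e : EdgeIdx n, quadCoef i j f g e * x e) *
          (w0 + ∑ e : EdgeIdx n, w e * x e)
      = (2 * ((m : ℝ) - 2) / (((n : ℝ) - 2) * ((m : ℝ) - 1))) *
          ∑ e : EdgeIdx n, quadCoef i j f g e * w e :=
  eigenvector_of_subtour_form_inside_U_general n m U hUcard hm4 hmn i j f g hiU hjU hfU hgU hij hif
    hig hjf hjg hfg w0 w
end
end
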